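/- arXiv:1803.11090 — 10 statements merged into one kernel-verified Lean document; each statement's English description precedes it below -/
import Mathlib

section
/- Under the hypotheses of the previous statement, at every point t where G is differentiable and t is a continuity point of F, one has F(t) = G(t) + (t/α) G'(t); equivalently G'(t) = α t^{-α-1} H(t). -/
/-!
For `s > 0` one has `G s = s ^ (-α) * K s` with `K s = s ^ α * F s - H s`. Since
`H s - H t = ∫_{(t, s]} x ^ α dν` lies between `t ^ α` and `s ^ α` times `F s - F t`,
`K s - K t = (s ^ α - t ^ α) F t + O(|s ^ α - t ^ α| |F s - F t|)`, and continuity of `F` at `t`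
makes the error `o(s - t)`. So `K' t = α t ^ (α - 1) F t`, and the product rule for
`s ^ (-α) * K s` gives `G' t = α t ^ (-α - 1) H t`.
-/

open MeasureTheory Real Filter Set Asymptotics Topology

section CumulativeIntegral

variable {ν : Measure ℝ} {φ : ℝ → ℝ} {a b c s t φ' : ℝ}

lemma setIntegral_Ioc_sub_setIntegral_Ioc (hab : a ≤ b) (hbc : b ≤ c)
    (hint : IntegrableOn φ (Ioc a c) ν) :
    ∫ x in Ioc a c, φ x ∂ν - ∫ x in Ioc a b, φ x ∂ν = ∫ x in Ioc b c, φ x ∂ν := by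
  rw [← Ioc_union_Ioc_eq_Ioc hab hbc] at hint ⊢
  rw [setIntegral_union (Ioc_disjoint_Ioc_of_le le_rfl) measurableSet_Ioc
    (hint.mono_set subset_union_left) (hint.mono_set subset_union_right)]
  ring

variable [IsFiniteMeasure ν]

lemma measureReal_Iic_sub_Iic (hab : a ≤ b) :
    ν.real (Iic b) - ν.real (Iic a) = ν.real (Ioc a b) := by
  rw [← Iic_union_Ioc_eq_Iic hab, measureReal_union (Iic_disjoint_Ioc le_rfl) measurableSet_Ioc]
  ring

lemma abs_setIntegral_Ioc_sub_mul_le (hab : a ≤ b) (hφ : MonotoneOn φ (Icc a b))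
    (hint : IntegrableOn φ (Ioc a b) ν) (hac : φ a ≤ c) (hcb : c ≤ φ b) :
    |∫ x in Ioc a b, φ x ∂ν - c * ν.real (Ioc a b)| ≤ (φ b - φ a) * ν.real (Ioc a b) := by
  have hconst : ∀ d : ℝ, ∫ _ in Ioc a b, d ∂ν = d * ν.real (Ioc a b) := fun d => by
    rw [setIntegral_const, smul_eq_mul, mul_comm]
  have hlower : φ a * ν.real (Ioc a b) ≤ ∫ x in Ioc a b, φ x ∂ν := by
    rw [← hconst]
    exact setIntegral_mono_on (integrableOn_const (measure_ne_top ν _)) hint measurableSet_Ioc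
      fun x hx => hφ ⟨le_rfl, hab⟩ (Ioc_subset_Icc_self hx) hx.1.le
  have hupper : ∫ x in Ioc a b, φ x ∂ν ≤ φ b * ν.real (Ioc a b) := by
    rw [← hconst]
    exact setIntegral_mono_on hint (integrableOn_const (measure_ne_top ν _)) measurableSet_Ioc
      fun x hx => hφ (Ioc_subset_Icc_self hx) ⟨hab, le_rfl⟩ hx.2
  have hm : 0 ≤ ν.real (Ioc a b) := measureReal_nonneg
  have h₁ := mul_le_mul_of_nonneg_right hac hm
  have h₂ := mul_le_mul_of_nonneg_right hcb hm
  rw [abs_sub_le_iff]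
  constructor <;> linarith

lemma abs_setIntegral_sub_sub_mul_le (has : a ≤ s) (hat : a ≤ t) (hφ : MonotoneOn φ (Ici a))
    (hint : ∀ b, IntegrableOn φ (Ioc a b) ν) :
    |∫ x in Ioc a s, φ x ∂ν - ∫ x in Ioc a t, φ x ∂ν - φ t * (ν.real (Iic s) - ν.real (Iic t))|
      ≤ |φ s - φ t| * |ν.real (Iic s) - ν.real (Iic t)| := by
  rcases le_total t s with hts | hst
  · rw [setIntegral_Ioc_sub_setIntegral_Ioc hat hts (hint s), measureReal_Iic_sub_Iic hts,
      abs_of_nonneg (sub_nonneg.2 (hφ hat (hat.trans hts) hts)), abs_of_nonneg measureReal_nonneg]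
    exact abs_setIntegral_Ioc_sub_mul_le hts (hφ.mono fun x hx => hat.trans hx.1)
      ((hint s).mono_set (Ioc_subset_Ioc_left hat)) le_rfl (hφ hat (hat.trans hts) hts)
  · have hΦ : ∫ x in Ioc a s, φ x ∂ν - ∫ x in Ioc a t, φ x ∂ν = -∫ x in Ioc s t, φ x ∂ν := by
      rw [← setIntegral_Ioc_sub_setIntegral_Ioc has hst (hint t), neg_sub]
    have hF : ν.real (Iic s) - ν.real (Iic t) = -ν.real (Ioc s t) := by
      rw [← measureReal_Iic_sub_Iic hst, neg_sub]
    rw [hΦ, hF, abs_sub_comm (φ s), abs_of_nonneg (sub_nonneg.2 (hφ has (has.trans hst) hst)),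
      abs_neg, abs_of_nonneg measureReal_nonneg, mul_neg, neg_sub_neg, abs_sub_comm]
    exact abs_setIntegral_Ioc_sub_mul_le hst (hφ.mono fun x hx => has.trans hx.1)
      ((hint t).mono_set (Ioc_subset_Ioc_left has)) (hφ has (has.trans hst) hst) le_rfl

theorem hasDerivAt_mul_measureReal_Iic_sub_setIntegral (hat : a < t)
    (hφ : MonotoneOn φ (Ici a)) (hint : ∀ b, IntegrableOn φ (Ioc a b) ν)
    (hφ' : HasDerivAt φ φ' t) (hF : ContinuousAt (fun s => ν.real (Iic s)) t) :
    HasDerivAt (fun s => φ s * ν.real (Iic s) - ∫ x in Ioc a s, φ x ∂ν)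
      (φ' * ν.real (Iic t)) t := by
  set F := fun s => ν.real (Iic s)
  set Φ := fun s => ∫ x in Ioc a s, φ x ∂ν
  have hlin : (fun s => φ s - φ t - (s - t) • φ') =o[𝓝 t] (fun s => s - t) :=
    hasDerivAt_iff_isLittleO.1 hφ'
  have hF₀ : (fun s => F s - F t) =o[𝓝 t] (fun _ => (1 : ℝ)) :=
    (isLittleO_one_iff ℝ).2 (tendsto_sub_nhds_zero_iff.2 hF)
  have hprod : (fun s => (φ s - φ t) * (F s - F t)) =o[𝓝 t] (fun s => s - t) := by
    simpa using hφ'.isBigO_sub.mul_isLittleO hF₀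
  have hrem : (fun s => Φ s - Φ t - φ t * (F s - F t)) =o[𝓝 t] (fun s => s - t) := by
    refine IsBigO.trans_isLittleO (IsBigO.of_bound 1 ?_) hprod
    filter_upwards [lt_mem_nhds hat] with s has
    rw [one_mul, norm_mul, Real.norm_eq_abs, Real.norm_eq_abs, Real.norm_eq_abs]
    exact abs_setIntegral_sub_sub_mul_le has.le hat.le hφ hint
  rw [hasDerivAt_iff_isLittleO]
  refine (((hlin.const_mul_left (F t)).add hprod).sub hrem).congr_left fun s => ?_
  simp only [smul_eq_mul]
  ring

end CumulativeIntegral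

lemma integral_max_one_sub_rpow_div_rpow {ν : Measure ℝ} [IsFiniteMeasure ν] {α s : ℝ}
    (hα : 0 < α) (hν : ν (Iic 0) = 0) (hs : 0 < s) :
    ∫ x, max (1 - x ^ α / s ^ α) 0 ∂ν
      = s ^ (-α) * (s ^ α * ν.real (Iic s) - ∫ x in Ioc 0 s, x ^ α ∂ν) := by
  have hsα : 0 < s ^ α := rpow_pos_of_pos hs α
  have hpos : ∀ᵐ x ∂ν, 0 < x := by
    rw [ae_iff]
    exact measure_mono_null (fun x hx => not_lt.1 hx) hν
  have hae : (fun x => max (1 - x ^ α / s ^ α) 0)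
      =ᵐ[ν] (Ioc 0 s).indicator fun x => s ^ (-α) * (s ^ α - x ^ α) := by
    filter_upwards [hpos] with x hx
    rw [rpow_neg hs.le]
    rcases le_or_gt x s with hxs | hsx
    · have : x ^ α ≤ s ^ α := rpow_le_rpow hx.le hxs hα.le
      rw [indicator_of_mem (show x ∈ Ioc 0 s from ⟨hx, hxs⟩),
        max_eq_left (by rwa [sub_nonneg, div_le_one hsα])]
      field_simp
    · have : s ^ α < x ^ α := rpow_lt_rpow hs.le hsx hα
      rw [indicator_of_notMem fun h => hsx.not_ge h.2,
        max_eq_right (by rw [sub_nonpos, le_div_iff₀ hsα]; linarith)]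
  have hνs : ν.real (Iic s) = ν.real (Ioc 0 s) := by
    rw [← measureReal_Iic_sub_Iic hs.le, measureReal_def ν (Iic 0), hν, ENNReal.toReal_zero,
      sub_zero]
  rw [integral_congr_ae hae, integral_indicator measurableSet_Ioc, integral_const_mul,
    integral_sub (integrable_const _) (continuous_rpow_const hα.le).integrableOn_Ioc,
    setIntegral_const, smul_eq_mul, hνs,
    mul_comm (ν.real _)]

theorem williamson_inversion_derivative
    (α : ℝ) (hα : 0 < α) (ν : Measure ℝ) [IsProbabilityMeasure ν]
    (hν : ν (Set.Iic 0) = 0)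
    (F G H : ℝ → ℝ)
    (hF : ∀ t, F t = (ν (Set.Iic t)).toReal)
    (hG : ∀ t, G t = ∫ x, max (1 - x ^ α / t ^ α) 0 ∂ν)
    (hH : ∀ t, H t = ∫ x in Set.Ioc 0 t, x ^ α ∂ν)
    (t : ℝ) (ht : 0 < t) (g : ℝ) (hderiv : HasDerivAt G g t)
    (hcont : ContinuousAt F t) :
    F t = G t + (t / α) * g ∧ g = α * t ^ (-α - 1) * H t := by
  have hFν : F = fun s => ν.real (Iic s) := funext hF
  have hHν : H = fun s => ∫ x in Ioc 0 s, x ^ α ∂ν := funext hH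
  have hK : HasDerivAt (fun s => s ^ α * F s - H s) (α * t ^ (α - 1) * F t) t := by
    rw [hFν, hHν]
    exact hasDerivAt_mul_measureReal_Iic_sub_setIntegral ht
      (monotoneOn_rpow_Ici_of_exponent_nonneg hα.le)
      (fun _ => (continuous_rpow_const hα.le).integrableOn_Ioc)
      (hasDerivAt_rpow_const (Or.inl ht.ne')) (hFν ▸ hcont)
  have hGK : ∀ s, 0 < s → G s = s ^ (-α) * (s ^ α * F s - H s) := fun s hs => by
    rw [hG, hF, hH, integral_max_one_sub_rpow_div_rpow hα hν hs, measureReal_def]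
  have hg : g = -α * t ^ (-α - 1) * (t ^ α * F t - H t) + t ^ (-α) * (α * t ^ (α - 1) * F t) :=
    hderiv.unique (((hasDerivAt_rpow_const (Or.inl ht.ne')).mul hK).congr_of_eventuallyEq
      (eventually_gt_nhds ht |>.mono hGK))
  have hinv : t ^ (-α) * t ^ α = 1 := by rw [← rpow_add ht, neg_add_cancel, rpow_zero]
  rw [hGK t ht]
  simp only [rpow_sub_one ht.ne'] at hg ⊢
  constructor
  · rw [hg]
    field_simp
    linear_combination -F t * hinv
  · rw [hg]
    field_simp
    ring
end

section
/- The Williamson transform is multiplicative with respect to the Kendall convolution: if ν₁, ν₂ are probability measures on [0,∞) and ν₁ △_α ν₂ denotes their Kendall convolution, then ∫ (1 - (xt)^α)₊ (ν₁ △_α ν₂)(dx) = (∫ (1 - (xt)^α)₊ ν₁(dx)) · (∫ (1 - (xt)^α)₊ ν₂(dx)) for all t ≥ 0. -/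
/-!
Put `a = (x t)^α`, `b = (y t)^α`. By the layer-cake formula the Williamson transform of `μ` at `t`
is `∫₀¹ μ{x : (x t)^α ≤ 1 - u} du`, and the level set is `(0, s]` with `s = (1 - u)^(1/α) / t`.
Inserting the Kendall cdf at `s` and exchanging the order of integration leaves, for fixed `a, b`,
the elementary integral `∫₀^{min(1-a, 1-b)} (1 - a b / (1 - u)²) du = (1 - a)₊ (1 - b)₊`,
which factorises.
-/

open MeasureTheory Real Filter Set

/-- The integrand of the Kendall cdf at level `(1 - u)^(1/α) / t`, in the variables
`a = (x t)^α`, `b = (y t)^α`. -/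
noncomputable def kendallKernel (u a b : ℝ) : ℝ :=
  if u < 1 - a ∧ u < 1 - b then 1 - a * b / (1 - u) ^ 2 else 0

theorem kendallKernel_comm (u a b : ℝ) : kendallKernel u a b = kendallKernel u b a := by
  simp only [kendallKernel, and_comm, mul_comm]

theorem abs_kendallKernel_le_one {u a b : ℝ} (ha : 0 ≤ a) (hb : 0 ≤ b) :
    |kendallKernel u a b| ≤ 1 := by
  unfold kendallKernel
  split_ifs with h
  · obtain ⟨hua, hub⟩ := h
    have hab : a * b ≤ (1 - u) ^ 2 := by nlinarith
    have hq : 0 ≤ a * b / (1 - u) ^ 2 := by positivity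
    have hq1 : a * b / (1 - u) ^ 2 ≤ 1 := div_le_one_of_le₀ hab (sq_nonneg _)
    exact abs_le.2 ⟨by linarith, by linarith⟩
  · simp

theorem measurable_kendallKernel :
    Measurable fun p : ℝ × ℝ × ℝ => kendallKernel p.1 p.2.1 p.2.2 := by
  unfold kendallKernel
  refine Measurable.ite ?_ (by fun_prop) measurable_const
  exact (measurableSet_lt measurable_fst (measurable_const.sub measurable_snd.fst)).inter
    (measurableSet_lt measurable_fst (measurable_const.sub measurable_snd.snd))

theorem intervalIntegral_one_sub_div_one_sub_sq (k : ℝ) {c : ℝ} (hc : c < 1) :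
    ∫ u in (0 : ℝ)..c, (1 - k / (1 - u) ^ 2) = c - k * ((1 - c)⁻¹ - 1) := by
  have hpos : ∀ u ∈ uIcc 0 c, 0 < 1 - u := by
    intro u hu
    rcases mem_uIcc.1 hu with h | h <;> linarith [h.2]
  have hderiv : ∀ u ∈ uIcc 0 c,
      HasDerivAt (fun u => u - k * (1 - u)⁻¹) (1 - k / (1 - u) ^ 2) u := by
    intro u hu
    refine ((hasDerivAt_id u).sub (((hasDerivAt_id u).const_sub 1).inv (hpos u hu).ne'
      |>.const_mul k)).congr_deriv ?_
    simp only [id, neg_neg]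
    ring
  rw [intervalIntegral.integral_eq_sub_of_hasDerivAt hderiv]
  · simp only [sub_zero, inv_one, mul_one]; ring
  · exact ContinuousOn.intervalIntegrable <| continuousOn_const.sub <|
      continuousOn_const.div (by fun_prop) fun u hu => (pow_pos (hpos u hu) 2).ne'

theorem setIntegral_kendallKernel {a b : ℝ} (ha : 0 < a) (hb : 0 < b) :
    ∫ u in Ioo 0 1, kendallKernel u a b = max (1 - a) 0 * max (1 - b) 0 := by
  wlog hba : b ≤ a generalizing a b
  · simpa only [kendallKernel_comm, mul_comm] using this hb ha (le_of_not_ge hba)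
  have hK : ∀ u, kendallKernel u a b = if u < 1 - a then 1 - a * b / (1 - u) ^ 2 else 0 :=
    fun u => if_congr ⟨And.left, fun h => ⟨h, by linarith⟩⟩ rfl rfl
  simp only [hK]
  rcases le_or_gt 1 a with ha1 | ha1
  · rw [max_eq_right (by linarith), zero_mul]
    refine setIntegral_eq_zero_of_forall_eq_zero fun u hu => if_neg ?_
    linarith [hu.1]
  have hsupp : ∫ u in Ioo 0 1, (if u < 1 - a then 1 - a * b / (1 - u) ^ 2 else 0) =
      ∫ u in Ioo 0 (1 - a), (1 - a * b / (1 - u) ^ 2) := by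
    rw [setIntegral_eq_of_subset_of_forall_sdiff_eq_zero measurableSet_Ioo
      (Ioo_subset_Ioo_right (by linarith : 1 - a ≤ 1)) fun u hu => if_neg ?_]
    · exact setIntegral_congr_fun measurableSet_Ioo fun u hu => if_pos hu.2
    · exact fun h => hu.2 ⟨hu.1.1, h⟩
  rw [hsupp, ← integral_Ioc_eq_integral_Ioo, ← intervalIntegral.integral_of_le (by linarith),
    intervalIntegral_one_sub_div_one_sub_sq _ (by linarith), max_eq_left (by linarith),
    max_eq_left (by linarith), sub_sub_cancel]
  field_simp

theorem setIntegral_integral_integral_kendallKernel {X : Type*} [MeasurableSpace X]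
    (ν₁ ν₂ : Measure X) [IsProbabilityMeasure ν₁] [IsProbabilityMeasure ν₂]
    {φ : X → ℝ} (hφ : Measurable φ) (h₁ : ∀ᵐ x ∂ν₁, 0 < φ x) (h₂ : ∀ᵐ y ∂ν₂, 0 < φ y) :
    ∫ u in Ioo 0 1, ∫ x, ∫ y, kendallKernel u (φ x) (φ y) ∂ν₂ ∂ν₁ =
      (∫ x, max (1 - φ x) 0 ∂ν₁) * (∫ y, max (1 - φ y) 0 ∂ν₂) := by
  have hKm : Measurable fun p : (ℝ × X) × X => kendallKernel p.1.1 (φ p.1.2) (φ p.2) :=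
    measurable_kendallKernel.comp (f := fun p : (ℝ × X) × X => (p.1.1, φ p.1.2, φ p.2))
      (by fun_prop)
  have hbound : ∀ u {x y}, 0 < φ x → 0 < φ y → ‖kendallKernel u (φ x) (φ y)‖ ≤ 1 :=
    fun u x y hx hy => abs_kendallKernel_le_one hx.le hy.le
  have hswap₁ : Integrable (Function.uncurry fun u x => ∫ y, kendallKernel u (φ x) (φ y) ∂ν₂)
      ((volume.restrict (Ioo 0 1)).prod ν₁) := by
    refine (integrable_const (1 : ℝ)).mono'
      hKm.stronglyMeasurable.integral_prod_right'.aestronglyMeasurable ?_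
    filter_upwards [Measure.quasiMeasurePreserving_snd.ae h₁] with q hq
    simpa [Function.uncurry] using
      norm_integral_le_of_norm_le_const (h₂.mono fun y hy => hbound q.1 hq hy)
  rw [integral_integral_swap hswap₁, ← integral_mul_const]
  refine integral_congr_ae (h₁.mono fun x hx => ?_)
  have hswap₂ : Integrable (Function.uncurry fun u y => kendallKernel u (φ x) (φ y))
      ((volume.restrict (Ioo 0 1)).prod ν₂) := by
    refine (integrable_const (1 : ℝ)).mono'
      (hKm.comp (f := fun q : ℝ × X => ((q.1, x), q.2)) (by fun_prop)).aestronglyMeasurable ?_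
    filter_upwards [Measure.quasiMeasurePreserving_snd.ae h₂] with q hq
    exact hbound q.1 hx hq
  dsimp only
  rw [integral_integral_swap hswap₂, ← integral_const_mul]
  refine integral_congr_ae (h₂.mono fun y hy => ?_)
  exact setIntegral_kendallKernel hx hy

theorem integral_max_one_sub_eq_setIntegral_measureReal {X : Type*} [MeasurableSpace X]
    (μ : Measure X) [IsFiniteMeasure μ] {φ : X → ℝ} (hφ : Measurable φ)
    (hφ0 : ∀ᵐ x ∂μ, 0 ≤ φ x) :
    ∫ x, max (1 - φ x) 0 ∂μ = ∫ u in Ioo 0 1, μ.real {x | φ x ≤ 1 - u} := by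
  have hle : ∀ᵐ x ∂μ, max (1 - φ x) 0 ≤ 1 := hφ0.mono fun x hx => max_le (by linarith) zero_le_one
  have hint : Integrable (fun x => max (1 - φ x) 0) μ :=
    (integrable_const (1 : ℝ)).mono' (by fun_prop)
      (hle.mono fun x hx => by rwa [norm_of_nonneg (le_max_right _ _)])
  rw [hint.integral_eq_integral_Ioc_meas_le (ae_of_all _ fun x => le_max_right _ _) hle,
    integral_Ioc_eq_integral_Ioo]
  refine setIntegral_congr_fun measurableSet_Ioo fun u hu => ?_
  simp only [le_max_iff, hu.1.not_ge, or_false, le_sub_comm]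

theorem ae_pos_of_measure_Iic_zero {μ : Measure ℝ} (h : μ (Iic 0) = 0) : ∀ᵐ x ∂μ, 0 < x :=
  (measure_eq_zero_iff_ae_notMem.1 h).mono fun _ hx => not_le.1 hx

theorem mul_rpow_le_iff_le_rpow_inv_div {α t x v : ℝ} (hα : 0 < α) (ht : 0 < t) (hx : 0 ≤ x)
    (hv : 0 ≤ v) : (x * t) ^ α ≤ v ↔ x ≤ v ^ α⁻¹ / t := by
  rw [le_div_iff₀ ht, le_rpow_inv_iff_of_pos (by positivity) hv hα]

theorem mul_rpow_lt_iff_lt_rpow_inv_div {α t x v : ℝ} (hα : 0 < α) (ht : 0 < t) (hx : 0 ≤ x)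
    (hv : 0 ≤ v) : (x * t) ^ α < v ↔ x < v ^ α⁻¹ / t := by
  rw [lt_div_iff₀ ht, lt_rpow_inv_iff_of_pos (by positivity) hv hα]

theorem kendallCdfIntegrand_eq_kendallKernel {α t u x y : ℝ} (hα : 0 < α) (ht : 0 < t)
    (hu : u < 1) (hx : 0 < x) (hy : 0 < y) :
    (if x < (1 - u) ^ α⁻¹ / t ∧ y < (1 - u) ^ α⁻¹ / t then
        1 - x ^ α * y ^ α / ((1 - u) ^ α⁻¹ / t) ^ (2 * α) else 0) =
      kendallKernel u ((x * t) ^ α) ((y * t) ^ α) := by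
  have hv : 0 < 1 - u := by linarith
  have hs : ((1 - u) ^ α⁻¹ / t) ^ (2 * α) = (1 - u) ^ 2 / (t ^ α) ^ 2 := by
    rw [div_rpow (by positivity) ht.le, ← rpow_mul hv.le, mul_comm 2 α,
      inv_mul_cancel_left₀ hα.ne', rpow_mul ht.le, rpow_two, rpow_two]
  have htα : t ^ α ≠ 0 := (rpow_pos_of_pos ht α).ne'
  simp only [kendallKernel, lt_sub_comm (a := u), hs, mul_rpow hx.le ht.le, mul_rpow hy.le ht.le,
    ← mul_rpow_lt_iff_lt_rpow_inv_div hα ht hx.le hv.le,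
    ← mul_rpow_lt_iff_lt_rpow_inv_div hα ht hy.le hv.le]
  congr 2
  field_simp

/-- The Kendall convolution `μ = ν₁ △_α ν₂` is characterized by its cdf:
`μ(Iic t) = ∫∫ (1 - x^α y^α / t^(2α)) 1_{x<t, y<t} dν₁(x) dν₂(y)`.
The Williamson transform is multiplicative with respect to it. -/
theorem williamson_multiplicative_kendall
    (α : ℝ) (hα : 0 < α)
    (ν₁ ν₂ μ : Measure ℝ)
    [IsProbabilityMeasure ν₁] [IsProbabilityMeasure ν₂] [IsProbabilityMeasure μ]
    (h₁ : ν₁ (Set.Iic 0) = 0) (h₂ : ν₂ (Set.Iic 0) = 0) (hμ0 : μ (Set.Iic 0) = 0)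
    (hμ : ∀ t : ℝ, 0 < t → (μ (Set.Iic t)).toReal =
      ∫ x, ∫ y, (if x < t ∧ y < t then 1 - x ^ α * y ^ α / t ^ (2 * α) else 0) ∂ν₂ ∂ν₁)
    (t : ℝ) (ht : 0 ≤ t) :
    ∫ x, max (1 - (x * t) ^ α) 0 ∂μ =
      (∫ x, max (1 - (x * t) ^ α) 0 ∂ν₁) * (∫ x, max (1 - (x * t) ^ α) 0 ∂ν₂) := by
  rcases ht.eq_or_lt with rfl | ht
  · simp [zero_rpow hα.ne']
  have hpos : ∀ {ν : Measure ℝ}, ν (Iic 0) = 0 → ∀ᵐ x ∂ν, 0 < (x * t) ^ α := fun h =>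
    (ae_pos_of_measure_Iic_zero h).mono fun x hx => rpow_pos_of_pos (mul_pos hx ht) α
  rw [integral_max_one_sub_eq_setIntegral_measureReal μ (by fun_prop)
      ((hpos hμ0).mono fun _ h => h.le),
    ← setIntegral_integral_integral_kendallKernel ν₁ ν₂ (by fun_prop) (hpos h₁) (hpos h₂)]
  refine setIntegral_congr_fun measurableSet_Ioo fun u hu => ?_
  have hv : 0 < 1 - u := by linarith [hu.2]
  have hlevel : {x | (x * t) ^ α ≤ 1 - u} =ᵐ[μ] Iic ((1 - u) ^ α⁻¹ / t) :=
    eventuallyEq_set.2 <| (ae_pos_of_measure_Iic_zero hμ0).mono fun x hx =>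
      mul_rpow_le_iff_le_rpow_inv_div hα ht hx.le hv.le
  rw [measureReal_congr hlevel, measureReal_def, hμ _ (by positivity)]
  refine integral_congr_ae <| (ae_pos_of_measure_Iic_zero h₁).mono fun x hx => ?_
  refine integral_congr_ae <| (ae_pos_of_measure_Iic_zero h₂).mono fun y hy => ?_
  exact kendallCdfIntegrand_eq_kendallKernel hα ht hu.2 hx hy
end

section
/- For the Kendall renewal process, the second moment satisfies E N(t)² = 2 Σ_{n≥1} n F_n(t) − Σ_{n≥1} F_n(t) = [ t^{-α} H(t)(1 + 3G(t)) + G(t)(1 - G(t)²) ] / (1 - G(t))³ whenever G(t) < 1. -/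
/-!
Since `F_{n+1} = G^n ((n+1) h + G)` with `h = t^{-α} H`, every series involved is dominated by
series `Σ n^k G^n`, which converge because `0 ≤ G < 1`. Abel summation turns
`Σ n² (F_n - F_{n+1})` into `Σ (2n+1) F_{n+1}`, and the closed forms `Σ (n+1) G^n = (1-G)^{-2}`,
`Σ (n+1)² G^n = (1+G)(1-G)^{-3}` give the value.
-/

section AbelSummation

variable {R : Type*} [Ring R] [TopologicalSpace R] [IsTopologicalRing R]

/-- Abel summation; the summability of `n² F_{n+1}` is what makes the boundary term vanish. -/
theorem hasSum_sq_mul_sub_succ {F : ℕ → R} {S₁ S₂ : R}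
    (hS₁ : HasSum (fun n ↦ F (n + 1)) S₁) (hS₂ : HasSum (fun n : ℕ ↦ ((n : R) + 1) * F (n + 1)) S₂)
    (hF : Summable (fun n : ℕ ↦ (n : R) ^ 2 * F (n + 1))) :
    HasSum (fun n : ℕ ↦ (n : R) ^ 2 * (F n - F (n + 1))) (2 * S₂ - S₁) := by
  obtain ⟨S, hS⟩ := hF
  have hshift : HasSum (fun n ↦ ((n + 1 : ℕ) : R) ^ 2 * F (n + 1)) (S + (2 * S₂ - S₁)) :=
    (hS.add ((hS₂.mul_left 2).sub hS₁)).congr_fun fun n ↦ by push_cast; noncomm_ring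
  have hsq : HasSum (fun n : ℕ ↦ (n : R) ^ 2 * F n) (S + (2 * S₂ - S₁)) := by
    simpa using (hasSum_nat_add_iff (f := fun n : ℕ ↦ (n : R) ^ 2 * F n) 1).mp hshift
  rw [show 2 * S₂ - S₁ = S + (2 * S₂ - S₁) - S by abel]
  exact (hsq.sub hS).congr_fun fun n ↦ by noncomm_ring

end AbelSummation

section GeometricSeries

variable {𝕜 : Type*} [NormedField 𝕜] {r : 𝕜}

theorem hasSum_succ_mul_geometric (hr : ‖r‖ < 1) :
    HasSum (fun n : ℕ ↦ ((n : 𝕜) + 1) * r ^ n) (1 / (1 - r) ^ 2) :=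
  (hasSum_choose_mul_geometric_of_norm_lt_one 1 hr).congr_fun fun n ↦ by simp

theorem hasSum_succ_sq_mul_geometric (hr : ‖r‖ < 1) :
    HasSum (fun n : ℕ ↦ ((n : 𝕜) + 1) ^ 2 * r ^ n) ((1 + r) / (1 - r) ^ 3) := by
  have hr₁ : 1 - r ≠ 0 := sub_ne_zero.mpr fun h ↦ by simp [← h] at hr
  have hsum := ((hasSum_choose_mul_geometric_of_norm_lt_one 2 hr).mul_left 2).sub
    (hasSum_succ_mul_geometric hr)
  rw [show (1 + r) / (1 - r) ^ 3 = 2 * (1 / (1 - r) ^ (2 + 1)) - 1 / (1 - r) ^ 2 by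
    field_simp; ring]
  refine hsum.congr_fun fun n ↦ ?_
  have hchoose : (n + 2) * (n + 1) = (n + 2).choose 2 * 2 := by
    simpa using Nat.add_one_mul_choose_eq (n + 1) 1
  replace hchoose := congrArg (Nat.cast (R := 𝕜)) hchoose
  push_cast at hchoose ⊢
  linear_combination (r ^ n) * hchoose

end GeometricSeries

section KendallTail

variable {𝕜 : Type*} [NormedField 𝕜] {g : 𝕜}

/-- `F_{n+1}(t)` for the Kendall renewal process, with `g = G(t)` and `h = t^{-α} H(t)`. -/
def kendallTail (g h : 𝕜) (n : ℕ) : 𝕜 := g ^ n * ((n + 1) * h + g)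

theorem hasSum_kendallTail (hg : ‖g‖ < 1) (h : 𝕜) :
    HasSum (kendallTail g h) (h / (1 - g) ^ 2 + g / (1 - g)) := by
  have hsum := ((hasSum_succ_mul_geometric hg).mul_left h).add
    ((hasSum_geometric_of_norm_lt_one hg).mul_left g)
  rw [show h / (1 - g) ^ 2 + g / (1 - g) = h * (1 / (1 - g) ^ 2) + g * (1 - g)⁻¹ by ring]
  exact hsum.congr_fun fun n ↦ by rw [kendallTail]; ring

theorem hasSum_succ_mul_kendallTail (hg : ‖g‖ < 1) (h : 𝕜) :
    HasSum (fun n : ℕ ↦ ((n : 𝕜) + 1) * kendallTail g h n)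
      (h * (1 + g) / (1 - g) ^ 3 + g / (1 - g) ^ 2) := by
  have hsum := ((hasSum_succ_sq_mul_geometric hg).mul_left h).add
    ((hasSum_succ_mul_geometric hg).mul_left g)
  rw [show h * (1 + g) / (1 - g) ^ 3 + g / (1 - g) ^ 2
      = h * ((1 + g) / (1 - g) ^ 3) + g * (1 / (1 - g) ^ 2) by ring]
  exact hsum.congr_fun fun n ↦ by rw [kendallTail]; ring

theorem summable_sq_mul_kendallTail (hg : ‖g‖ < 1) (h : 𝕜) :
    Summable (fun n : ℕ ↦ (n : 𝕜) ^ 2 * kendallTail g h n) := by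
  have h₂ := summable_pow_mul_geometric_of_norm_lt_one 2 hg
  have h₃ := summable_pow_mul_geometric_of_norm_lt_one 3 hg
  exact (((h₃.mul_left h).add (h₂.mul_left h)).add (h₂.mul_left g)).congr fun n ↦ by
    rw [kendallTail]; ring

end KendallTail

theorem kendall_renewal_second_moment_general
    (α : ℝ) (t : ℝ)
    (G H : ℝ → ℝ) (Fn : ℕ → ℝ)
    (hFn : ∀ n : ℕ, Fn (n + 1) = G t ^ n * (((n : ℝ) + 1) * t ^ (-α) * H t + G t))
    (hG0 : 0 ≤ G t) (hG1 : G t < 1) :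
    (∑' n : ℕ, (n : ℝ) ^ 2 * (Fn n - Fn (n + 1))
      = 2 * (∑' n : ℕ, ((n : ℝ) + 1) * Fn (n + 1)) - ∑' n : ℕ, Fn (n + 1)) ∧
    (∑' n : ℕ, (n : ℝ) ^ 2 * (Fn n - Fn (n + 1))
      = (t ^ (-α) * H t * (1 + 3 * G t) + G t * (1 - G t ^ 2)) / (1 - G t) ^ 3) := by
  set g := G t
  set h := t ^ (-α) * H t
  have hg : ‖g‖ < 1 := by rwa [Real.norm_of_nonneg hG0]
  have htail (n : ℕ) : Fn (n + 1) = kendallTail g h n := by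
    rw [hFn, kendallTail]
    ring
  have hS₁ := hasSum_kendallTail hg h
  have hS₂ := hasSum_succ_mul_kendallTail hg h
  have hmoment := hasSum_sq_mul_sub_succ (F := Fn) (by simpa only [htail] using hS₁)
    (by simpa only [htail] using hS₂) (by simpa only [htail] using summable_sq_mul_kendallTail hg h)
  rw [hmoment.tsum_eq]
  refine ⟨by simp only [htail, hS₁.tsum_eq, hS₂.tsum_eq], ?_⟩
  have hg₁ : 1 - g ≠ 0 := by linarith
  field_simp
  ring

/-- Second moment of the Kendall renewal counting variable:
`E N(t)² = Σ n² (F_n(t) - F_{n+1}(t)) = 2 Σ_{n≥1} n F_n(t) - Σ_{n≥1} F_n(t)`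
with explicit value. -/
theorem kendall_renewal_second_moment
    (α : ℝ) (hα : 0 < α) (t : ℝ) (ht : 0 < t)
    (G H : ℝ → ℝ) (Fn : ℕ → ℝ) (hF0 : Fn 0 = 1)
    (hFn : ∀ n : ℕ, Fn (n + 1) = G t ^ n * (((n : ℝ) + 1) * t ^ (-α) * H t + G t))
    (hG0 : 0 ≤ G t) (hG1 : G t < 1) (hH0 : 0 ≤ H t) :
    (∑' n : ℕ, (n : ℝ) ^ 2 * (Fn n - Fn (n + 1))
      = 2 * (∑' n : ℕ, ((n : ℝ) + 1) * Fn (n + 1)) - ∑' n : ℕ, Fn (n + 1)) ∧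
    (∑' n : ℕ, (n : ℝ) ^ 2 * (Fn n - Fn (n + 1))
      = (t ^ (-α) * H t * (1 + 3 * G t) + G t * (1 - G t ^ 2)) / (1 - G t) ^ 3) :=
  kendall_renewal_second_moment_general α t G H Fn hFn hG0 hG1
end

section
/- If ν is the uniform distribution on (0,1), then G(t) = (t∧1) − (t∧1)^{α+1}/((α+1)t^α), H(t) = (t∧1)^{α+1}/(α+1), and the Kendall renewal function equals R(t) = t((α+1)² − α² t)/(α+1 − αt)² for t ≤ 1 and R(t) = 2(α+1)t^α − 1 for t > 1. -/
open MeasureTheory Real Filter Set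

/-!
Only `x ∈ (0, 1]` matters, and there the truncation `(1 - x^α/t^α)₊` just cuts the
integrand off at `x = t`. Both `G t` and `H t` thus become integrals of `1 - x^α/t^α` and
`x^α` over `(0, t ∧ 1]`, which are elementary; `R t` is then a rational function of `t`
and `t^α` in each of the two regimes.
-/

lemma integral_Ioc_zero_rpow {α b : ℝ} (hα : -1 < α) (hb : 0 ≤ b) :
    ∫ x in Ioc 0 b, x ^ α = b ^ (α + 1) / (α + 1) := by
  rw [← intervalIntegral.integral_of_le hb, integral_rpow (Or.inl hα),
    zero_rpow (by linarith), sub_zero]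

lemma integral_Ioc_zero_one_sub_rpow_div {α b : ℝ} (hα : -1 < α) (hb : 0 ≤ b) (c : ℝ) :
    ∫ x in Ioc 0 b, (1 - x ^ α / c) = b - b ^ (α + 1) / ((α + 1) * c) := by
  have hint : IntegrableOn (fun x : ℝ => x ^ α) (Ioc 0 b) :=
    (intervalIntegral.intervalIntegrable_rpow' hα).1
  rw [integral_sub (integrable_const 1) (hint.div_const c), integral_div,
    integral_Ioc_zero_rpow hα hb, setIntegral_const, Real.volume_real_Ioc_of_le hb, div_div]
  simp

lemma max_one_sub_rpow_div_rpow_zero_eq_indicator {α t x : ℝ} (hα : 0 < α) (ht : 0 < t)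
    (hx : 0 ≤ x) :
    max (1 - x ^ α / t ^ α) 0 = (Iic t).indicator (fun x => 1 - x ^ α / t ^ α) x := by
  have htα : 0 < t ^ α := rpow_pos_of_pos ht α
  by_cases hxt : x ≤ t
  · rw [indicator_of_mem (mem_Iic.2 hxt), max_eq_left]
    rw [sub_nonneg, div_le_one htα]
    exact rpow_le_rpow hx hxt hα.le
  · rw [indicator_of_notMem (mt mem_Iic.1 hxt), max_eq_right]
    rw [sub_nonpos, one_le_div htα]
    exact rpow_le_rpow ht.le (not_le.1 hxt).le hα.le

lemma integral_uniform_max_one_sub_rpow_div_rpow {α t : ℝ} (hα : 0 < α) (ht : 0 < t) :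
    ∫ x in Ioo 0 1, max (1 - x ^ α / t ^ α) 0 =
      min t 1 - min t 1 ^ (α + 1) / ((α + 1) * t ^ α) := by
  rw [Measure.restrict_congr_set Ioo_ae_eq_Ioc,
    setIntegral_congr_fun measurableSet_Ioc fun x hx =>
      max_one_sub_rpow_div_rpow_zero_eq_indicator hα ht hx.1.le,
    setIntegral_indicator measurableSet_Iic, Ioc_inter_Iic, inf_comm,
    integral_Ioc_zero_one_sub_rpow_div (by linarith) (le_min ht.le zero_le_one)]

lemma setIntegral_uniform_Ioc_rpow {α t : ℝ} (hα : -1 < α) (ht : 0 ≤ t) :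
    ∫ x in Ioc 0 t, x ^ α ∂(volume.restrict (Ioo 0 1)) = min t 1 ^ (α + 1) / (α + 1) := by
  rw [Measure.restrict_congr_set Ioo_ae_eq_Ioc, Measure.restrict_restrict measurableSet_Ioc,
    Ioc_inter_Ioc, sup_idem, integral_Ioc_zero_rpow hα (le_min ht zero_le_one)]

lemma kendall_renewal_of_le_one {α t : ℝ} (hα : 0 < α) (ht : 0 < t) (h1 : t ≤ 1) :
    α * t / (α + 1) / (1 - α * t / (α + 1)) +
        t ^ (α + 1) / (α + 1) / (t ^ α * (1 - α * t / (α + 1)) ^ 2) =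
      t * ((α + 1) ^ 2 - α ^ 2 * t) / ((α + 1) - α * t) ^ 2 := by
  have hden : 0 < α + 1 - α * t := by nlinarith
  have htα : 0 < t ^ α := rpow_pos_of_pos ht α
  have h1G : 1 - α * t / (α + 1) = (α + 1 - α * t) / (α + 1) := by field_simp
  rw [h1G, rpow_add_one ht.ne']
  field_simp
  ring

lemma kendall_renewal_of_one_lt {α t : ℝ} (hα : 0 < α) (ht : 1 < t) :
    (1 - 1 / ((α + 1) * t ^ α)) / (1 - (1 - 1 / ((α + 1) * t ^ α))) +
        1 / (α + 1) / (t ^ α * (1 - (1 - 1 / ((α + 1) * t ^ α))) ^ 2) =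
      2 * (α + 1) * t ^ α - 1 := by
  have htα : 0 < t ^ α := rpow_pos_of_pos (by linarith) α
  field_simp
  ring

/-- Kendall renewal function for the uniform unit step distribution on (0,1). -/
theorem kendall_renewal_uniform
    (α : ℝ) (hα : 0 < α)
    (ν : Measure ℝ) (hν : ν = volume.restrict (Set.Ioo (0 : ℝ) 1))
    (G H R : ℝ → ℝ)
    (hG : ∀ t, G t = ∫ x, max (1 - x ^ α / t ^ α) 0 ∂ν)
    (hH : ∀ t, H t = ∫ x in Set.Ioc 0 t, x ^ α ∂ν)
    (hR : ∀ t, R t = G t / (1 - G t) + H t / (t ^ α * (1 - G t) ^ 2)) :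
    ∀ t : ℝ, 0 < t →
      G t = min t 1 - (min t 1) ^ (α + 1) / ((α + 1) * t ^ α) ∧
      H t = (min t 1) ^ (α + 1) / (α + 1) ∧
      R t = if t ≤ 1 then t * ((α + 1) ^ 2 - α ^ 2 * t) / ((α + 1) - α * t) ^ 2
            else 2 * (α + 1) * t ^ α - 1 := by
  intro t ht
  subst hν
  have hGt := (hG t).trans (integral_uniform_max_one_sub_rpow_div_rpow hα ht)
  have hHt := (hH t).trans (setIntegral_uniform_Ioc_rpow (by linarith) ht.le)
  refine ⟨hGt, hHt, ?_⟩
  rw [hR, hGt, hHt]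
  split_ifs with h1
  · have hG' : t - t ^ (α + 1) / ((α + 1) * t ^ α) = α * t / (α + 1) := by
      have htα : 0 < t ^ α := rpow_pos_of_pos ht α
      rw [rpow_add_one ht.ne']
      field_simp
      ring
    rw [min_eq_left h1, hG']
    exact kendall_renewal_of_le_one hα ht h1
  · rw [min_eq_right (not_le.1 h1).le, one_rpow]
    exact kendall_renewal_of_one_lt hα (not_le.1 h1)
end

section
/- If ν = π_{2α} is the Pareto distribution with density 2α x^{-2α-1} 1_{[1,∞)}(x), then G(t) = (1 - t^{-α})₊², H(t) = 2(1 - t^{-α})₊, and the Kendall renewal function equals R(t) = (t^α − 1)(1 − 3t^α + 4t^{2α})/(2t^α − 1)² for t > 1 (and 0 for t ≤ 1). -/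
open MeasureTheory Real Set

/-!
Under `ν`, both `G t` and `H t` are integrals over `(0, t]` (the positive part in `G` cuts the
integrand off at `x = t`), so they vanish for `t ≤ 1`, and for `t > 1` they reduce to the power
integrals `∫₁ᵗ 2α x^(-2α-1) x^γ dx = 2α/(2α-γ) (1 - t^(γ-2α))` with `γ = 0, α`. Writing
`u = t^(-α)`, this gives `G = (1 - u²) - 2u(1 - u) = (1 - u)²` and `H = 2(1 - u)`; the formula
for `R` then follows by clearing denominators.
-/

theorem integral_withDensity_ofReal {X : Type*} [MeasurableSpace X] {μ : Measure X} {f : X → ℝ}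
    (hf : Measurable f) (hf_nonneg : ∀ x, 0 ≤ f x) (g : X → ℝ) :
    ∫ x, g x ∂μ.withDensity (fun x => ENNReal.ofReal (f x)) = ∫ x, f x * g x ∂μ := by
  rw [integral_withDensity_eq_integral_toReal_smul hf.ennreal_ofReal
    (ae_of_all _ fun _ => ENNReal.ofReal_lt_top)]
  simp only [ENNReal.toReal_ofReal (hf_nonneg _), smul_eq_mul]

theorem max_one_sub_rpow_neg_of_le_one {α t : ℝ} (hα : 0 ≤ α) (ht : 0 < t) (ht1 : t ≤ 1) :
    max (1 - t ^ (-α)) 0 = 0 :=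
  max_eq_right (by linarith [one_le_rpow_of_pos_of_le_one_of_nonpos ht ht1 (neg_nonpos.mpr hα)])

theorem max_one_sub_rpow_neg_of_one_lt {α t : ℝ} (hα : 0 < α) (ht1 : 1 < t) :
    max (1 - t ^ (-α)) 0 = 1 - t ^ (-α) :=
  max_eq_left (by linarith [rpow_lt_one_of_one_lt_of_neg ht1 (neg_neg_iff_pos.mpr hα)])

theorem pos_of_mem_uIcc_one {t x : ℝ} (ht : 0 < t) (hx : x ∈ uIcc 1 t) : 0 < x :=
  lt_of_lt_of_le (lt_min one_pos ht) hx.1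

noncomputable def paretoPdf (β x : ℝ) : ℝ := if 1 ≤ x then β * x ^ (-β - 1) else 0

noncomputable def paretoMeasure (β : ℝ) : Measure ℝ :=
  volume.withDensity fun x => ENNReal.ofReal (paretoPdf β x)

theorem paretoPdf_nonneg {β : ℝ} (hβ : 0 ≤ β) (x : ℝ) : 0 ≤ paretoPdf β x := by
  unfold paretoPdf
  split_ifs with hx
  · exact mul_nonneg hβ (rpow_nonneg (zero_le_one.trans hx) _)
  · exact le_rfl

theorem measurable_paretoPdf (β : ℝ) : Measurable (paretoPdf β) :=
  Measurable.ite measurableSet_Ici (by fun_prop) measurable_const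

theorem integral_paretoMeasure {β : ℝ} (hβ : 0 ≤ β) (g : ℝ → ℝ) :
    ∫ x, g x ∂paretoMeasure β = ∫ x, paretoPdf β x * g x :=
  integral_withDensity_ofReal (measurable_paretoPdf β) (paretoPdf_nonneg hβ) g

theorem setIntegral_paretoMeasure {β : ℝ} (hβ : 0 ≤ β) (g : ℝ → ℝ) {s : Set ℝ}
    (hs : MeasurableSet s) : ∫ x in s, g x ∂paretoMeasure β = ∫ x in s, paretoPdf β x * g x := by
  rw [paretoMeasure, restrict_withDensity hs]
  exact integral_withDensity_ofReal (measurable_paretoPdf β) (paretoPdf_nonneg hβ) g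

theorem setIntegral_Ioc_paretoPdf_mul_of_le_one (β : ℝ) (h : ℝ → ℝ) {t : ℝ} (ht : t ≤ 1) :
    ∫ x in Ioc 0 t, paretoPdf β x * h x = 0 := by
  rw [integral_Ioc_eq_integral_Ioo]
  refine setIntegral_eq_zero_of_forall_eq_zero fun x hx => ?_
  simp [paretoPdf, hx.2.trans_le ht]

theorem setIntegral_Ioc_paretoPdf_mul_of_one_le (β : ℝ) (h : ℝ → ℝ) {t : ℝ} (ht : 1 ≤ t) :
    ∫ x in Ioc 0 t, paretoPdf β x * h x = ∫ x in 1..t, β * x ^ (-β - 1) * h x := by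
  have hind : (Ioc 0 t).indicator (fun x => paretoPdf β x * h x)
      = (Icc 1 t).indicator (fun x => β * x ^ (-β - 1) * h x) := by
    ext x
    by_cases hx : 1 ≤ x
    · simp [indicator_apply, paretoPdf, hx, zero_lt_one.trans_le hx]
    · simp [indicator_apply, paretoPdf, hx]
  rw [← integral_indicator measurableSet_Ioc, hind, integral_indicator measurableSet_Icc,
    integral_Icc_eq_integral_Ioc, intervalIntegral.integral_of_le ht]

theorem intervalIntegrable_pareto_density_mul_rpow (β γ : ℝ) {t : ℝ} (ht : 0 < t) :
    IntervalIntegrable (fun x => β * x ^ (-β - 1) * x ^ γ) volume 1 t := by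
  have hne : ∀ x ∈ uIcc 1 t, x ≠ 0 := fun x hx => (pos_of_mem_uIcc_one ht hx).ne'
  refine ContinuousOn.intervalIntegrable ?_
  fun_prop (disch := exact fun x hx => Or.inl (hne x hx))

theorem integral_pareto_density_mul_rpow {β γ t : ℝ} (hγ : γ ≠ β) (ht : 0 < t) :
    ∫ x in 1..t, β * x ^ (-β - 1) * x ^ γ = β / (β - γ) * (1 - t ^ (γ - β)) := by
  have hzero : (0 : ℝ) ∉ uIcc 1 t := fun h => (pos_of_mem_uIcc_one ht h).ne rfl
  have hexp : γ - β - 1 ≠ -1 := fun h => hγ (by linarith)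
  rw [intervalIntegral.integral_congr (g := fun x => β * x ^ (γ - β - 1)) fun x hx => ?_,
    intervalIntegral.integral_const_mul, integral_rpow (Or.inr ⟨hexp, hzero⟩),
    show γ - β - 1 + 1 = γ - β by ring, one_rpow]
  · have : β - γ ≠ 0 := sub_ne_zero.mpr hγ.symm
    field_simp
    ring
  · rw [mul_assoc, ← rpow_add (pos_of_mem_uIcc_one ht hx)]
    ring_nf

theorem paretoPdf_mul_max_eq_indicator {α t : ℝ} (hα : 0 ≤ α) (ht : 0 < t) (β x : ℝ) :
    paretoPdf β x * max (1 - x ^ α / t ^ α) 0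
      = (Ioc 0 t).indicator (fun x => paretoPdf β x * (1 - x ^ α / t ^ α)) x := by
  have htα : 0 < t ^ α := rpow_pos_of_pos ht α
  rcases le_or_gt x 0 with hx0 | hx0
  · simp [paretoPdf, not_lt.mpr hx0, (hx0.trans_lt one_pos).not_ge]
  rcases le_or_gt x t with hxt | hxt
  · have : x ^ α / t ^ α ≤ 1 := (div_le_one htα).mpr (rpow_le_rpow hx0.le hxt hα)
    rw [indicator_of_mem (show x ∈ Ioc 0 t from ⟨hx0, hxt⟩), max_eq_left (by linarith)]
  · have : 1 ≤ x ^ α / t ^ α := (one_le_div htα).mpr (rpow_le_rpow ht.le hxt.le hα)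
    rw [indicator_of_notMem fun h => hxt.not_ge h.2, max_eq_right (by linarith), mul_zero]

theorem integral_max_one_sub_rpow_div_paretoMeasure {α t : ℝ} (hα : 0 < α) (ht : 0 < t) :
    ∫ x, max (1 - x ^ α / t ^ α) 0 ∂paretoMeasure (2 * α) = (max (1 - t ^ (-α)) 0) ^ 2 := by
  rw [integral_paretoMeasure (by positivity),
    funext (paretoPdf_mul_max_eq_indicator hα.le ht (2 * α)), integral_indicator measurableSet_Ioc]
  rcases le_or_gt t 1 with ht1 | ht1
  · rw [setIntegral_Ioc_paretoPdf_mul_of_le_one _ _ ht1,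
      max_one_sub_rpow_neg_of_le_one hα.le ht ht1]
    norm_num
  · have hsplit : ∀ x, 2 * α * x ^ (-(2 * α) - 1) * (1 - x ^ α / t ^ α)
        = 2 * α * x ^ (-(2 * α) - 1) * x ^ (0 : ℝ)
          - t ^ (-α) * (2 * α * x ^ (-(2 * α) - 1) * x ^ α) := fun x => by
      rw [rpow_zero, rpow_neg ht.le]
      ring
    rw [setIntegral_Ioc_paretoPdf_mul_of_one_le _ _ ht1.le, max_one_sub_rpow_neg_of_one_lt hα ht1]
    simp_rw [hsplit]
    rw [intervalIntegral.integral_sub (intervalIntegrable_pareto_density_mul_rpow _ _ ht)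
        ((intervalIntegrable_pareto_density_mul_rpow _ _ ht).const_mul _),
      intervalIntegral.integral_const_mul,
      integral_pareto_density_mul_rpow (by linarith) ht,
      integral_pareto_density_mul_rpow (by linarith) ht,
      show (0 : ℝ) - 2 * α = -α * 2 by ring, show α - 2 * α = -α by ring,
      rpow_mul ht.le, rpow_two]
    field_simp
    ring

theorem setIntegral_Ioc_rpow_paretoMeasure {α t : ℝ} (hα : 0 < α) (ht : 0 < t) :
    ∫ x in Ioc 0 t, x ^ α ∂paretoMeasure (2 * α) = 2 * max (1 - t ^ (-α)) 0 := by
  rw [setIntegral_paretoMeasure (by positivity) _ measurableSet_Ioc]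
  rcases le_or_gt t 1 with ht1 | ht1
  · rw [setIntegral_Ioc_paretoPdf_mul_of_le_one _ _ ht1,
      max_one_sub_rpow_neg_of_le_one hα.le ht ht1]
    norm_num
  · rw [setIntegral_Ioc_paretoPdf_mul_of_one_le _ _ ht1.le, max_one_sub_rpow_neg_of_one_lt hα ht1,
      integral_pareto_density_mul_rpow (by linarith) ht, show α - 2 * α = -α by ring]
    field_simp
    ring

theorem kendall_renewal_eq {s : ℝ} (hs : 1 < s) :
    (1 - s⁻¹) ^ 2 / (1 - (1 - s⁻¹) ^ 2) + 2 * (1 - s⁻¹) / (s * (1 - (1 - s⁻¹) ^ 2) ^ 2)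
      = (s - 1) * (1 - 3 * s + 4 * s ^ 2) / (2 * s - 1) ^ 2 := by
  have hs0 : s ≠ 0 := by positivity
  have h2s : 2 * s - 1 ≠ 0 := by linarith
  have hden : 1 - (1 - s⁻¹) ^ 2 = (2 * s - 1) / s ^ 2 := by
    field_simp
    ring
  rw [hden]
  field_simp
  ring

/-- Kendall renewal function for the Pareto unit step distribution `π_{2α}`. -/
theorem kendall_renewal_pareto
    (α : ℝ) (hα : 0 < α)
    (ν : Measure ℝ)
    (hν : ν = volume.withDensity
      (fun x => ENNReal.ofReal (if 1 ≤ x then 2 * α * x ^ (-(2 * α) - 1) else 0)))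
    (G H R : ℝ → ℝ)
    (hG : ∀ t, G t = ∫ x, max (1 - x ^ α / t ^ α) 0 ∂ν)
    (hH : ∀ t, H t = ∫ x in Set.Ioc 0 t, x ^ α ∂ν)
    (hR : ∀ t, R t = G t / (1 - G t) + H t / (t ^ α * (1 - G t) ^ 2)) :
    ∀ t : ℝ, 0 < t →
      G t = (max (1 - t ^ (-α)) 0) ^ 2 ∧
      H t = 2 * max (1 - t ^ (-α)) 0 ∧
      R t = if 1 < t then
          (t ^ α - 1) * (1 - 3 * t ^ α + 4 * t ^ (2 * α)) / (2 * t ^ α - 1) ^ 2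
        else 0 := by
  intro t ht
  have hν : ν = paretoMeasure (2 * α) := hν
  have hGt : G t = (max (1 - t ^ (-α)) 0) ^ 2 := by
    rw [hG, hν, integral_max_one_sub_rpow_div_paretoMeasure hα ht]
  have hHt : H t = 2 * max (1 - t ^ (-α)) 0 := by
    rw [hH, hν, setIntegral_Ioc_rpow_paretoMeasure hα ht]
  refine ⟨hGt, hHt, ?_⟩
  rw [hR, hGt, hHt]
  split_ifs with ht1
  · rw [max_one_sub_rpow_neg_of_one_lt hα ht1, rpow_neg ht.le, mul_comm 2 α, rpow_mul ht.le,
      rpow_two, ← kendall_renewal_eq (one_lt_rpow ht1 hα)]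
  · rw [max_one_sub_rpow_neg_of_le_one hα.le ht (not_lt.mp ht1)]
    norm_num
end

section
/- Let F be a cdf on (0,∞), H(x) = ∫₀^x y^α dF(y). If H is regularly varying at infinity with index θ where 0 ≤ θ < α, then x^α (1 − F(x)) / H(x) → θ/(α − θ) as x → ∞. -/
/-!
Fix `x > 1` and cut `(t, ∞)` into the blocks `(t xᵏ, t xᵏ⁺¹]`. On the `k`-th block `y ^ α` lies
between `t ^ α x ^ (α k)` and `t ^ α x ^ (α (k + 1))`, so up to a factor `x ^ α` the tail
`t ^ α (1 - F t)` equals `∑ₖ x ^ (-α k) (H (t xᵏ⁺¹) - H (t xᵏ))`. Divided by `H t`, regular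
variation sends this sum to
`∑ₖ x ^ (-α k) (x ^ (θ (k + 1)) - x ^ (θ k)) = (x ^ θ - 1) / (1 - x ^ (θ - α))`; dominated
convergence applies because `H (t xᵏ) ≤ ρᵏ H t` for large `t` and some `ρ < x ^ α`.
As `x ↓ 1` both bounds tend to `θ / (α - θ)`.
-/

open MeasureTheory Real Filter Set Topology

noncomputable def weightedIncrements (H : ℝ → ℝ) (x b t : ℝ) : ℝ :=
  ∑' k : ℕ, (b ^ k)⁻¹ * (H (t * x ^ (k + 1)) - H (t * x ^ k))

namespace MeasureTheory

variable {ν : Measure ℝ} {α a b t x : ℝ}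

lemma setIntegral_rpow_Ioc_nonneg (ha : 0 ≤ a) (b : ℝ) : 0 ≤ ∫ x in Ioc a b, x ^ α ∂ν :=
  setIntegral_nonneg measurableSet_Ioc fun _ hx => rpow_nonneg (ha.trans hx.1.le) α

variable [IsFiniteMeasure ν]

lemma integrableOn_rpow_Ioc (hα : 0 ≤ α) (ha : 0 ≤ a) (b : ℝ) :
    IntegrableOn (· ^ α) (Ioc a b) ν := by
  refine Measure.integrableOn_of_bounded (M := b ^ α) (measure_ne_top ν _)
    (continuous_rpow_const hα).aestronglyMeasurable ?_
  filter_upwards [ae_restrict_mem measurableSet_Ioc] with x hx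
  rw [norm_of_nonneg (rpow_nonneg (ha.trans hx.1.le) α)]
  exact rpow_le_rpow (ha.trans hx.1.le) hx.2 hα

lemma monotone_setIntegral_rpow_Ioc_zero (hα : 0 ≤ α) :
    Monotone fun t => ∫ x in Ioc 0 t, x ^ α ∂ν := fun _ t hst =>
  setIntegral_mono_set (integrableOn_rpow_Ioc hα le_rfl t)
    ((ae_restrict_mem measurableSet_Ioc).mono fun _ hx => rpow_nonneg hx.1.le α)
    (Ioc_subset_Ioc_right hst).eventuallyLE

lemma setIntegral_rpow_Ioc_zero_sub (hα : 0 ≤ α) (ha : 0 ≤ a) (hab : a ≤ b) :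
    (∫ x in Ioc 0 b, x ^ α ∂ν) - ∫ x in Ioc 0 a, x ^ α ∂ν = ∫ x in Ioc a b, x ^ α ∂ν := by
  rw [← Ioc_union_Ioc_eq_Ioc ha hab, setIntegral_union (Ioc_disjoint_Ioc_of_le le_rfl)
    measurableSet_Ioc (integrableOn_rpow_Ioc hα le_rfl a) (integrableOn_rpow_Ioc hα ha b),
    add_sub_cancel_left]

lemma rpow_mul_measureReal_le_setIntegral_rpow (hα : 0 ≤ α) (ha : 0 ≤ a) :
    a ^ α * ν.real (Ioc a b) ≤ ∫ x in Ioc a b, x ^ α ∂ν :=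
  setIntegral_ge_of_const_le_real measurableSet_Ioc (measure_ne_top ν _)
    (fun _ hx => rpow_le_rpow ha hx.1.le hα) (integrableOn_rpow_Ioc hα ha b)

lemma setIntegral_rpow_le_rpow_mul_measureReal (hα : 0 ≤ α) (ha : 0 ≤ a) :
    ∫ x in Ioc a b, x ^ α ∂ν ≤ b ^ α * ν.real (Ioc a b) := by
  rw [mul_comm, ← smul_eq_mul, ← setIntegral_const]
  exact setIntegral_mono_on (integrableOn_rpow_Ioc hα ha b)
    (integrableOn_const (measure_ne_top ν _)) measurableSet_Ioc fun x hx => rpow_le_rpow (ha.trans hx.1.le) hx.2 hα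

lemma hasSum_measureReal_Ioc_of_monotone {u : ℕ → ℝ} (hu : Monotone u)
    (hu' : Tendsto u atTop atTop) :
    HasSum (fun k => ν.real (Ioc (u k) (u (k + 1)))) (ν.real (Ioi (u 0))) := by
  have hunion : ⋃ k, Ioc (u k) (u (k + 1)) = Ioi (u 0) :=
    iUnion_Ioc_map_succ_eq_Ioi (fun k => hu (Nat.zero_le k)) (not_bddAbove_of_tendsto_atTop hu')
  have hdisj : Pairwise (Function.onFun Disjoint fun k => Ioc (u k) (u (k + 1))) := by
    simpa using hu.pairwise_disjoint_on_Ioc_succ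
  have hmeas := measure_iUnion (μ := ν) hdisj fun _ => measurableSet_Ioc
  rw [hunion] at hmeas
  have hfin : ∑' k, ν (Ioc (u k) (u (k + 1))) ≠ ⊤ := hmeas ▸ measure_ne_top ν _
  simp only [measureReal_def, hmeas, ENNReal.tsum_toReal_eq fun _ => measure_ne_top ν _]
  exact ENNReal.hasSum_toReal hfin

lemma weightedIncrements_mem_Icc (hα : 0 ≤ α) (ht : 0 < t) (hx : 1 < x) :
    weightedIncrements (fun s => ∫ y in Ioc 0 s, y ^ α ∂ν) x (x ^ α) t ∈
      Icc (t ^ α * ν.real (Ioi t)) (x ^ α * (t ^ α * ν.real (Ioi t))) := by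
  set b := x ^ α
  have hb : 0 < b := rpow_pos_of_pos (zero_lt_one.trans hx) α
  set u : ℕ → ℝ := fun k => t * x ^ k
  have hu : Monotone u := fun k l hkl =>
    mul_le_mul_of_nonneg_left (pow_le_pow_right₀ hx.le hkl) ht.le
  have hu0 : ∀ k, 0 ≤ u k := fun k => by positivity
  have hu_rpow : ∀ k, u k ^ α = t ^ α * b ^ k := fun k => by
    rw [mul_rpow ht.le (by positivity), ← rpow_pow_comm (zero_lt_one.trans hx).le]
  have htail : HasSum (fun k => ν.real (Ioc (u k) (u (k + 1)))) (ν.real (Ioi t)) := by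
    simpa [u] using hasSum_measureReal_Ioc_of_monotone (ν := ν) hu
      ((tendsto_pow_atTop_atTop_of_one_lt hx).const_mul_atTop ht)
  have hincr : ∀ k, (∫ y in Ioc 0 (u (k + 1)), y ^ α ∂ν) - ∫ y in Ioc 0 (u k), y ^ α ∂ν =
      ∫ y in Ioc (u k) (u (k + 1)), y ^ α ∂ν := fun k =>
    setIntegral_rpow_Ioc_zero_sub hα (hu0 k) (hu k.le_succ)
  have hlower : ∀ k, t ^ α * ν.real (Ioc (u k) (u (k + 1))) ≤
      (b ^ k)⁻¹ * ∫ y in Ioc (u k) (u (k + 1)), y ^ α ∂ν := fun k => by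
    rw [le_inv_mul_iff₀ (by positivity), ← mul_assoc, mul_comm (b ^ k), ← hu_rpow]
    exact rpow_mul_measureReal_le_setIntegral_rpow hα (hu0 k)
  have hupper : ∀ k, (b ^ k)⁻¹ * ∫ y in Ioc (u k) (u (k + 1)), y ^ α ∂ν ≤
      b * (t ^ α * ν.real (Ioc (u k) (u (k + 1)))) := fun k => by
    rw [inv_mul_le_iff₀ (by positivity)]
    calc _ ≤ u (k + 1) ^ α * ν.real (Ioc (u k) (u (k + 1))) :=
          setIntegral_rpow_le_rpow_mul_measureReal hα (hu0 k)
      _ = _ := by rw [hu_rpow]; ring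
  have hsum : Summable fun k => (b ^ k)⁻¹ * ∫ y in Ioc (u k) (u (k + 1)), y ^ α ∂ν :=
    Summable.of_nonneg_of_le (fun k => (mul_nonneg (by positivity) measureReal_nonneg).trans
      (hlower k)) hupper ((htail.mul_left _).mul_left b).summable
  have hW : weightedIncrements (fun s => ∫ y in Ioc 0 s, y ^ α ∂ν) x b t =
      ∑' k, (b ^ k)⁻¹ * ∫ y in Ioc (u k) (u (k + 1)), y ^ α ∂ν :=
    tsum_congr fun k => by rw [← hincr k]
  rw [hW]
  exact ⟨hasSum_le hlower (htail.mul_left _) hsum.hasSum,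
    hasSum_le hupper hsum.hasSum ((htail.mul_left _).mul_left b)⟩

end MeasureTheory

section RegularVariation

variable {H : ℝ → ℝ} {θ x ρ b : ℝ}

lemma eventually_pos_of_tendsto_div_self {l : Filter ℝ} (hH : ∀ t, 0 ≤ H t)
    (h : Tendsto (fun t => H t / H t) l (𝓝 1)) : ∀ᶠ t in l, 0 < H t :=
  (h.eventually (eventually_ne_nhds one_ne_zero)).mono fun t ht =>
    (hH t).lt_of_ne' fun h0 => ht (by simp [h0])

lemma eventually_forall_le_pow_mul (hx : 1 ≤ x) (hρ : 0 ≤ ρ)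
    (h : ∀ᶠ t in atTop, H (t * x) ≤ ρ * H t) :
    ∀ᶠ t in atTop, ∀ k : ℕ, H (t * x ^ k) ≤ ρ ^ k * H t := by
  obtain ⟨T, hT⟩ := eventually_atTop.1 h
  filter_upwards [eventually_ge_atTop (max T 0)] with t ht k
  induction k with
  | zero => simp
  | succ k ih =>
    have hTk : T ≤ t * x ^ k := (le_max_left _ _).trans <| ht.trans <|
      le_mul_of_one_le_right ((le_max_right _ _).trans ht) (one_le_pow₀ hx)
    calc H (t * x ^ (k + 1)) = H (t * x ^ k * x) := by rw [pow_succ, mul_assoc]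
      _ ≤ ρ * H (t * x ^ k) := hT _ hTk
      _ ≤ ρ * (ρ ^ k * H t) := mul_le_mul_of_nonneg_left ih hρ
      _ = ρ ^ (k + 1) * H t := by ring

lemma tsum_inv_pow_mul_pow_succ_sub_pow {c : ℝ} (hc : 0 ≤ c) (hcb : c < b) :
    ∑' k : ℕ, (b ^ k)⁻¹ * (c ^ (k + 1) - c ^ k) = (c - 1) / (1 - c / b) := by
  have hb : 0 < b := hc.trans_lt hcb
  have hterm : ∀ k : ℕ, (b ^ k)⁻¹ * (c ^ (k + 1) - c ^ k) = (c - 1) * (c / b) ^ k := fun k => by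
    rw [div_pow, pow_succ]; ring
  rw [tsum_congr hterm, tsum_mul_left,
    tsum_geometric_of_lt_one (by positivity) ((div_lt_one hb).2 hcb), div_eq_mul_inv (c - 1)]

lemma tendsto_weightedIncrements_div (hmono : Monotone H) (hH : ∀ t, 0 ≤ H t)
    (hRV : ∀ y, 0 < y → Tendsto (fun t => H (t * y) / H t) atTop (𝓝 (y ^ θ)))
    (hx : 1 ≤ x) (hb : x ^ θ < b) :
    Tendsto (fun t => weightedIncrements H x b t / H t) atTop
      (𝓝 ((x ^ θ - 1) / (1 - x ^ θ / b))) := by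
  set c := x ^ θ
  have hx0 : 0 < x := zero_lt_one.trans_le hx
  have hc : 0 < c := rpow_pos_of_pos hx0 θ
  obtain ⟨ρ, hcρ, hρb⟩ := exists_between hb
  have hρ : 0 < ρ := hc.trans hcρ
  have hb0 : 0 < b := hρ.trans hρb
  have hpos : ∀ᶠ t in atTop, 0 < H t :=
    eventually_pos_of_tendsto_div_self hH (by simpa using hRV 1 one_pos)
  have hstep : ∀ᶠ t in atTop, H (t * x) ≤ ρ * H t := by
    filter_upwards [hpos, (hRV x hx0).eventually (eventually_lt_nhds hcρ)] with t ht hlt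
    exact ((div_lt_iff₀ ht).1 hlt).le
  have hterm : ∀ k : ℕ, Tendsto (fun t => (b ^ k)⁻¹ * ((H (t * x ^ (k + 1)) - H (t * x ^ k)) / H t))
      atTop (𝓝 ((b ^ k)⁻¹ * (c ^ (k + 1) - c ^ k))) := fun k => by
    have hpow (n : ℕ) := hRV (x ^ n) (by positivity)
    simpa only [sub_div, ← rpow_pow_comm hx0.le] using ((hpow (k + 1)).sub (hpow k)).const_mul _
  have hdom : ∀ᶠ t in atTop, ∀ k : ℕ,
      ‖(b ^ k)⁻¹ * ((H (t * x ^ (k + 1)) - H (t * x ^ k)) / H t)‖ ≤ ρ * (ρ / b) ^ k := by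
    filter_upwards [hpos, eventually_forall_le_pow_mul hx hρ.le hstep, eventually_ge_atTop 0]
      with t ht hgeom ht0 k
    have hincr : 0 ≤ H (t * x ^ (k + 1)) - H (t * x ^ k) :=
      sub_nonneg.2 (hmono (mul_le_mul_of_nonneg_left (pow_le_pow_right₀ hx k.le_succ) ht0))
    rw [norm_of_nonneg (by positivity)]
    calc (b ^ k)⁻¹ * ((H (t * x ^ (k + 1)) - H (t * x ^ k)) / H t) ≤ (b ^ k)⁻¹ * ρ ^ (k + 1) := by
          gcongr
          rw [div_le_iff₀ ht]
          linarith [hgeom (k + 1), hH (t * x ^ k)]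
      _ = ρ * (ρ / b) ^ k := by rw [div_pow, pow_succ]; ring
  have hsum : Summable fun k : ℕ => ρ * (ρ / b) ^ k :=
    (summable_geometric_of_lt_one (by positivity) ((div_lt_one hb0).2 hρb)).mul_left ρ
  rw [← tsum_inv_pow_mul_pow_succ_sub_pow hc.le hb]
  refine (tendsto_tsum_of_dominated_convergence hsum hterm hdom).congr fun t => ?_
  simp only [weightedIncrements, ← tsum_div_const, mul_div_assoc]

end RegularVariation

lemma tendsto_rpow_sub_one_div_sub_one (p : ℝ) :
    Tendsto (fun x : ℝ => (x ^ p - 1) / (x - 1)) (𝓝[>] 1) (𝓝 p) := by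
  have hslope :=
    hasDerivAt_iff_tendsto_slope.1 (hasDerivAt_rpow_const (p := p) (Or.inl one_ne_zero))
  rw [one_rpow, mul_one] at hslope
  refine (hslope.mono_left (nhdsWithin_mono 1 fun y hy => ne_of_gt hy)).congr fun y => ?_
  rw [slope_def_field, one_rpow]

lemma tendsto_rpow_sub_one_div_one_sub_rpow_div {α θ : ℝ} (hθα : θ ≠ α) :
    Tendsto (fun x : ℝ => (x ^ θ - 1) / (1 - x ^ θ / x ^ α)) (𝓝[>] 1) (𝓝 (θ / (α - θ))) := by
  have hden := (tendsto_rpow_sub_one_div_sub_one (θ - α)).neg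
  rw [neg_sub] at hden
  refine ((tendsto_rpow_sub_one_div_sub_one θ).div hden (sub_ne_zero.2 hθα.symm)).congr' ?_
  filter_upwards [self_mem_nhdsWithin] with x (hx : 1 < x)
  rw [Pi.div_apply, rpow_sub (zero_lt_one.trans hx), ← neg_div, neg_sub,
    div_div_div_cancel_right₀ (sub_ne_zero.2 hx.ne')]

lemma tendsto_of_forall_eventually_squeeze {ι β : Type*} {p : Filter ι} [p.NeBot]
    {l : Filter β} {f : β → ℝ} {L : ℝ} {c u : ι → ℝ}
    (hc : Tendsto c p (𝓝 1)) (hu : Tendsto u p (𝓝 L))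
    (h : ∀ᶠ i in p, ∃ U : β → ℝ, Tendsto U l (𝓝 (u i)) ∧
      ∀ᶠ t in l, c i * U t ≤ f t ∧ f t ≤ U t) :
    Tendsto f l (𝓝 L) := by
  have hcu : Tendsto (fun i => c i * u i) p (𝓝 L) := by simpa using hc.mul hu
  refine tendsto_order.2 ⟨fun a ha => ?_, fun a ha => ?_⟩
  · obtain ⟨i, hai, U, hU, hf⟩ := ((hcu.eventually (eventually_gt_nhds ha)).and h).exists
    filter_upwards [(hU.const_mul (c i)).eventually (eventually_gt_nhds hai), hf] with t h1 h2
    exact h1.trans_le h2.1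
  · obtain ⟨i, hai, U, hU, hf⟩ := ((hu.eventually (eventually_lt_nhds ha)).and h).exists
    filter_upwards [hU.eventually (eventually_lt_nhds hai), hf] with t h1 h2
    exact h2.2.trans_lt h1

theorem tail_ratio_limit_of_RV_general
    (α θ : ℝ) (hα : 0 < α) (hθα : θ < α)
    (ν : Measure ℝ) [IsProbabilityMeasure ν]
    (F H : ℝ → ℝ)
    (hF : ∀ t, F t = (ν (Set.Iic t)).toReal)
    (hH : ∀ t, H t = ∫ x in Set.Ioc 0 t, x ^ α ∂ν)
    (hRV : ∀ x : ℝ, 0 < x →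
      Tendsto (fun t => H (t * x) / H t) atTop (nhds (x ^ θ))) :
    Tendsto (fun x => x ^ α * (1 - F x) / H x) atTop (nhds (θ / (α - θ))) := by
  obtain rfl : H = fun t => ∫ x in Ioc 0 t, x ^ α ∂ν := funext hH
  have htail : ∀ t, 1 - F t = ν.real (Ioi t) := fun t => by
    rw [hF, ← measureReal_def, ← compl_Iic, probReal_compl_eq_one_sub measurableSet_Iic]
  have hH0 (t : ℝ) : 0 ≤ ∫ x in Ioc 0 t, x ^ α ∂ν := setIntegral_rpow_Ioc_nonneg le_rfl t
  have hpos := eventually_pos_of_tendsto_div_self hH0 (by simpa using hRV 1 one_pos)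
  have hc : Tendsto (fun x : ℝ => (x ^ α)⁻¹) (𝓝[>] 1) (𝓝 1) := by
    simpa using (((continuous_rpow_const hα.le).tendsto 1).inv₀ (by simp)).mono_left
      nhdsWithin_le_nhds
  refine tendsto_of_forall_eventually_squeeze hc
    (tendsto_rpow_sub_one_div_one_sub_rpow_div hθα.ne) ?_
  filter_upwards [self_mem_nhdsWithin] with x (hx : 1 < x)
  refine ⟨_, tendsto_weightedIncrements_div (monotone_setIntegral_rpow_Ioc_zero hα.le) hH0 hRV
    hx.le (rpow_lt_rpow_of_exponent_lt hx hθα), ?_⟩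
  filter_upwards [hpos, eventually_gt_atTop 0] with t hHt ht
  obtain ⟨hlo, hup⟩ := weightedIncrements_mem_Icc (ν := ν) hα.le ht hx
  rw [htail]
  constructor
  · rw [← mul_div_assoc, div_le_div_iff_of_pos_right hHt, inv_mul_le_iff₀ (by positivity)]
    exact hup
  · exact div_le_div_of_nonneg_right hlo hHt.le

/-- If the truncated α-moment function `H` is regularly varying with index
`θ ∈ [0, α)`, then `x^α (1 - F(x))/H(x) → θ/(α - θ)`. -/
theorem tail_ratio_limit_of_RV
    (α θ : ℝ) (hα : 0 < α) (hθ0 : 0 ≤ θ) (hθα : θ < α)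
    (ν : Measure ℝ) [IsProbabilityMeasure ν] (hν : ν (Set.Iic 0) = 0)
    (F H : ℝ → ℝ)
    (hF : ∀ t, F t = (ν (Set.Iic t)).toReal)
    (hH : ∀ t, H t = ∫ x in Set.Ioc 0 t, x ^ α ∂ν)
    (hRV : ∀ x : ℝ, 0 < x →
      Tendsto (fun t => H (t * x) / H t) atTop (nhds (x ^ θ))) :
    Tendsto (fun x => x ^ α * (1 - F x) / H x) atTop (nhds (θ / (α - θ))) :=
  tail_ratio_limit_of_RV_general α θ hα hθα ν F H hF hH hRV
end

section
/- Elementary renewal theorem for Kendall random walks: if H ∈ RV_θ with 0 ≤ θ < α, then x^{-α} R(x) H(x) → (α − θ)(2α − θ)/α² as x → ∞, where R(x) = G(x)/(1−G(x)) + H(x)/(x^α (1−G(x))²). -/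
/-!
Write `H t = ∫_{(0,t]} y^α dν`. Fubini gives
`∫_1^∞ u^(-α-1) H(u x) du = (H x + x^α ν(x,∞)) / α = x^α (1 - G x) / α`.
Regular variation yields the doubling inequality `H(2x) ≤ 2^θ' H x` for some `θ < θ' < α`, hence
Potter's bound `H(u x) ≤ 2^θ' u^θ' H x` (`u ≥ 1`), so dominated convergence gives
`x^α (1 - G x) / H x → α ∫_1^∞ u^(θ-α-1) du = α / (α - θ)`. The same bound gives
`x^(-α) H x → 0`, so `G → 1`, and `x^(-α) R x H x = G x E x + (E x)²` with
`E x = H x / (x^α (1 - G x)) → (α - θ) / α`.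
-/

open MeasureTheory Real Filter Set Topology Asymptotics

def IsRegularlyVarying (H : ℝ → ℝ) (θ : ℝ) : Prop :=
  ∀ x : ℝ, 0 < x → Tendsto (fun t => H (t * x) / H t) atTop (𝓝 (x ^ θ))

theorem le_two_rpow_mul_rpow_mul_of_doubling {H : ℝ → ℝ} {θ' x₀ : ℝ} (hmono : Monotone H)
    (hH0 : ∀ t, 0 ≤ H t) (hθ' : 0 ≤ θ') (hx₀ : 0 ≤ x₀)
    (hdouble : ∀ x, x₀ ≤ x → H (2 * x) ≤ 2 ^ θ' * H x) {x u : ℝ} (hx : x₀ ≤ x) (hu : 1 ≤ u) :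
    H (u * x) ≤ 2 ^ θ' * u ^ θ' * H x := by
  have hsmall : ∀ x, x₀ ≤ x → ∀ u, 1 ≤ u → u ≤ 2 → H (u * x) ≤ 2 ^ θ' * u ^ θ' * H x := by
    intro x hx u hu1 hu2
    calc H (u * x) ≤ H (2 * x) := hmono (mul_le_mul_of_nonneg_right hu2 (hx₀.trans hx))
      _ ≤ 2 ^ θ' * H x := hdouble x hx
      _ ≤ 2 ^ θ' * u ^ θ' * H x := mul_le_mul_of_nonneg_right
          (le_mul_of_one_le_right (by positivity) (one_le_rpow hu1 hθ')) (hH0 x)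
  have hpow : ∀ n : ℕ, ∀ x, x₀ ≤ x → ∀ u, 1 ≤ u → u ≤ 2 ^ n →
      H (u * x) ≤ 2 ^ θ' * u ^ θ' * H x := by
    intro n
    induction n with
    | zero => exact fun x hx u hu1 hu2 => hsmall x hx u hu1 (by simp at hu2; linarith)
    | succ n ih =>
      intro x hx u hu1 hu2
      rcases le_or_gt u 2 with hu | hu
      · exact hsmall x hx u hu1 hu
      have hx' : x₀ ≤ u / 2 * x :=
        hx.trans (le_mul_of_one_le_left (hx₀.trans hx) (by linarith))
      calc H (u * x) = H (2 * (u / 2 * x)) := by ring_nf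
        _ ≤ 2 ^ θ' * H (u / 2 * x) := hdouble _ hx'
        _ ≤ 2 ^ θ' * (2 ^ θ' * (u / 2) ^ θ' * H x) := by
          gcongr
          exact ih x hx _ (by linarith) (by rw [pow_succ] at hu2; linarith)
        _ = 2 ^ θ' * u ^ θ' * H x := by
          rw [div_rpow (by linarith) zero_le_two]
          field_simp
  obtain ⟨n, hn⟩ := pow_unbounded_of_one_lt u one_lt_two
  exact hpow n x hx u hu hn.le

namespace IsRegularlyVarying

variable {H : ℝ → ℝ} {θ θ' : ℝ}

theorem eventually_ne_zero (hH : IsRegularlyVarying H θ) : ∀ᶠ t in atTop, H t ≠ 0 := by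
  have h := hH 1 one_pos
  simp only [mul_one, one_rpow] at h
  filter_upwards [h.eventually_ne one_ne_zero] with t ht h0
  simp [h0] at ht

theorem eventually_doubling (hH : IsRegularlyVarying H θ) (hH0 : ∀ t, 0 ≤ H t)
    (hθ : θ < θ') : ∀ᶠ t in atTop, H (2 * t) ≤ 2 ^ θ' * H t := by
  filter_upwards [hH.eventually_ne_zero,
    (hH 2 two_pos).eventually_lt_const (rpow_lt_rpow_of_exponent_lt one_lt_two hθ)]
    with t hne hlt
  rw [mul_comm 2 t]
  exact (div_le_iff₀ ((hH0 t).lt_of_ne' hne)).1 hlt.le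

theorem eventually_le_two_rpow_mul (hH : IsRegularlyVarying H θ) (hmono : Monotone H)
    (hH0 : ∀ t, 0 ≤ H t) (hθ : θ < θ') (hθ' : 0 ≤ θ') :
    ∀ᶠ x in atTop, ∀ u, 1 ≤ u → H (u * x) ≤ 2 ^ θ' * u ^ θ' * H x := by
  obtain ⟨x₀, hx₀⟩ := eventually_atTop.1 (hH.eventually_doubling hH0 hθ)
  filter_upwards [eventually_ge_atTop (max x₀ 0)] with x hx u hu
  exact le_two_rpow_mul_rpow_mul_of_doubling hmono hH0 hθ' (le_max_right x₀ 0)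
    (fun y hy => hx₀ y ((le_max_left _ _).trans hy)) hx hu

theorem isBigO_rpow (hH : IsRegularlyVarying H θ) (hmono : Monotone H) (hH0 : ∀ t, 0 ≤ H t)
    (hθ : θ < θ') (hθ' : 0 ≤ θ') : H =O[atTop] fun x => x ^ θ' := by
  obtain ⟨x₀, hx₀⟩ := eventually_atTop.1 (hH.eventually_le_two_rpow_mul hmono hH0 hθ hθ')
  set x₁ := max x₀ 1
  have hx₁ : 0 < x₁ := zero_lt_one.trans_le (le_max_right _ _)
  refine IsBigO.of_bound (2 ^ θ' * H x₁ / x₁ ^ θ') ?_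
  filter_upwards [eventually_ge_atTop x₁] with x hx
  have hx0 : 0 ≤ x := hx₁.le.trans hx
  have h := hx₀ x₁ (le_max_left _ _) (x / x₁) ((one_le_div hx₁).2 hx)
  rw [div_mul_cancel₀ x hx₁.ne', div_rpow hx0 hx₁.le] at h
  rw [norm_of_nonneg (hH0 x), norm_of_nonneg (rpow_nonneg hx0 θ')]
  calc H x ≤ 2 ^ θ' * (x ^ θ' / x₁ ^ θ') * H x₁ := h
    _ = 2 ^ θ' * H x₁ / x₁ ^ θ' * x ^ θ' := by ring

theorem tendsto_rpow_neg_mul (hH : IsRegularlyVarying H θ) (hmono : Monotone H)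
    (hH0 : ∀ t, 0 ≤ H t) {α : ℝ} (hα : 0 < α) (hθα : θ < α) :
    Tendsto (fun x => x ^ (-α) * H x) atTop (𝓝 0) := by
  obtain ⟨θ', hθ', hθ'α⟩ := exists_between (max_lt hθα hα)
  have hbig := (isBigO_refl (fun x : ℝ => x ^ (-α)) atTop).mul
    (hH.isBigO_rpow hmono hH0 ((le_max_left _ _).trans_lt hθ') ((le_max_right _ _).trans hθ'.le))
  refine hbig.trans_tendsto ((tendsto_rpow_neg_atTop (sub_pos.2 hθ'α)).congr' ?_)
  filter_upwards [eventually_gt_atTop 0] with x hx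
  rw [← rpow_add hx]
  ring_nf

theorem tendsto_integral_Ioi_one (hH : IsRegularlyVarying H θ) (hmono : Monotone H)
    (hH0 : ∀ t, 0 ≤ H t) {α : ℝ} (hα : 0 < α) (hθα : θ < α) :
    Tendsto (fun x => ∫ u in Ioi 1, u ^ (-α - 1) * (H (u * x) / H x)) atTop
      (𝓝 (1 / (α - θ))) := by
  obtain ⟨θ', hθ', hθ'α⟩ := exists_between (max_lt hθα hα)
  have hlim : ∫ u in Ioi (1 : ℝ), u ^ (θ - α - 1) = 1 / (α - θ) := by
    rw [integral_Ioi_rpow_of_lt (by linarith) one_pos, one_rpow,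
      show θ - α - 1 + 1 = -(α - θ) by ring, div_neg, neg_div, neg_neg]
  rw [← hlim]
  refine tendsto_integral_filter_of_dominated_convergence (fun u => 2 ^ θ' * u ^ (θ' - α - 1))
    (Eventually.of_forall fun x => ((measurable_id.pow_const _).mul
      ((hmono.measurable.comp (measurable_id.mul_const x)).div_const _)).aestronglyMeasurable)
    ?_ ((integrableOn_Ioi_rpow_of_lt (by linarith) one_pos).const_mul _) ?_
  · filter_upwards [hH.eventually_le_two_rpow_mul hmono hH0 ((le_max_left _ _).trans_lt hθ')
      ((le_max_right _ _).trans hθ'.le), hH.eventually_ne_zero] with x hx hne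
    refine ae_restrict_of_forall_mem measurableSet_Ioi fun u (hu : 1 < u) => ?_
    have hHx : 0 < H x := (hH0 x).lt_of_ne' hne
    have hu0 : 0 < u := one_pos.trans hu
    rw [norm_of_nonneg (mul_nonneg (rpow_nonneg hu0.le _) (div_nonneg (hH0 _) hHx.le))]
    calc u ^ (-α - 1) * (H (u * x) / H x) ≤ u ^ (-α - 1) * (2 ^ θ' * u ^ θ') := by
          gcongr
          exact (div_le_iff₀ hHx).2 (hx u hu.le)
      _ = 2 ^ θ' * u ^ (θ' - α - 1) := by
          rw [mul_left_comm, ← rpow_add hu0]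
          ring_nf
  · refine ae_restrict_of_forall_mem measurableSet_Ioi fun u (hu : 1 < u) => ?_
    have h := (hH u (one_pos.trans hu)).const_mul (u ^ (-α - 1))
    rw [← rpow_add (one_pos.trans hu), show -α - 1 + θ = θ - α - 1 by ring] at h
    simpa only [mul_comm _ u] using h

end IsRegularlyVarying

theorem lintegral_Ioi_rpow_neg_sub_one {α a : ℝ} (hα : 0 < α) (ha : 0 < a) :
    ∫⁻ u in Ioi a, ENNReal.ofReal (u ^ (-α - 1)) = ENNReal.ofReal (a ^ (-α) / α) := by
  rw [← ofReal_integral_eq_lintegral_ofReal (integrableOn_Ioi_rpow_of_lt (by linarith) ha)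
    (ae_restrict_of_forall_mem measurableSet_Ioi fun u hu => rpow_nonneg (ha.trans hu).le _),
    integral_Ioi_rpow_of_lt (by linarith) ha, show -α - 1 + 1 = -α by ring, neg_div, div_neg,
    neg_neg]

theorem lintegral_Ioi_one_rpow_mul_indicator_Ioc {α x : ℝ} (hα : 0 < α) (hx : 0 < x) (y : ℝ) :
    ∫⁻ u in Ioi 1, ENNReal.ofReal (u ^ (-α - 1)) *
        (Ioc 0 (u * x)).indicator (fun z => ENNReal.ofReal (z ^ α)) y =
      ENNReal.ofReal (1 / α) * ((Ioc 0 x).indicator (fun z => ENNReal.ofReal (z ^ α)) y +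
        (Ioi x).indicator (fun _ => ENNReal.ofReal (x ^ α)) y) := by
  rcases le_or_gt y 0 with hy | hy
  · simp [indicator_of_notMem (fun h : y ∈ Ioc 0 _ => hy.not_gt h.1),
      indicator_of_notMem (fun h : y ∈ Ioi x => hy.not_gt (hx.trans h))]
  have hind : ∀ u, ENNReal.ofReal (u ^ (-α - 1)) *
      (Ioc 0 (u * x)).indicator (fun z => ENNReal.ofReal (z ^ α)) y =
      (Ici (y / x)).indicator
        (fun u => ENNReal.ofReal (u ^ (-α - 1)) * ENNReal.ofReal (y ^ α)) u := by
    intro u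
    by_cases h : y / x ≤ u
    · rw [indicator_of_mem (mem_Ici.2 h),
        indicator_of_mem (show y ∈ Ioc 0 (u * x) from ⟨hy, (div_le_iff₀ hx).1 h⟩)]
    · rw [indicator_of_notMem (mt mem_Ici.1 h),
        indicator_of_notMem fun h' => h ((div_le_iff₀ hx).2 h'.2), mul_zero]
  simp_rw [hind]
  rw [lintegral_indicator measurableSet_Ici, Measure.restrict_restrict measurableSet_Ici,
    lintegral_mul_const _ (by fun_prop)]
  rcases le_or_gt y x with hyx | hyx
  · rw [inter_eq_self_of_subset_right
        (show Ioi 1 ⊆ Ici (y / x) from fun u hu => ((div_le_one hx).2 hyx).trans (le_of_lt hu)),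
      lintegral_Ioi_rpow_neg_sub_one hα one_pos, one_rpow,
      indicator_of_mem (show y ∈ Ioc 0 x from ⟨hy, hyx⟩),
      indicator_of_notMem (show y ∉ Ioi x from hyx.not_gt), add_zero, mul_comm]
  · rw [inter_eq_self_of_subset_left
        (show Ici (y / x) ⊆ Ioi 1 from fun u hu => ((one_lt_div hx).2 hyx).trans_le hu),
      Measure.restrict_congr_set Ioi_ae_eq_Ici.symm,
      lintegral_Ioi_rpow_neg_sub_one hα (div_pos hy hx),
      indicator_of_notMem fun h => hyx.not_ge h.2, indicator_of_mem (show y ∈ Ioi x from hyx),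
      zero_add, ← ENNReal.ofReal_mul (by positivity), ← ENNReal.ofReal_mul (by positivity)]
    congr 1
    rw [rpow_neg (div_pos hy hx).le, div_rpow hy.le hx.le]
    field_simp

theorem lintegral_Ioi_one_rpow_mul_lintegral_Ioc {ν : Measure ℝ} [SFinite ν] {α x : ℝ}
    (hα : 0 < α) (hx : 0 < x) :
    ∫⁻ u in Ioi 1,
        ENNReal.ofReal (u ^ (-α - 1)) * ∫⁻ y in Ioc 0 (u * x), ENNReal.ofReal (y ^ α) ∂ν =
      ENNReal.ofReal (1 / α) *
        (∫⁻ y in Ioc 0 x, ENNReal.ofReal (y ^ α) ∂ν + ENNReal.ofReal (x ^ α) * ν (Ioi x)) := by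
  have hf : Measurable fun z : ℝ => ENNReal.ofReal (z ^ α) :=
    (measurable_id.pow_const α).ennreal_ofReal
  have hkernel : Measurable fun p : ℝ × ℝ => ENNReal.ofReal (p.1 ^ (-α - 1)) *
      (Ioc 0 (p.1 * x)).indicator (fun z => ENNReal.ofReal (z ^ α)) p.2 := by
    simp only [indicator_apply, mem_Ioc]
    refine ((measurable_fst.pow_const _).ennreal_ofReal).mul
      (Measurable.ite ?_ (hf.comp measurable_snd) measurable_const)
    exact (measurableSet_lt measurable_const measurable_snd).inter
      (measurableSet_le measurable_snd (measurable_fst.mul_const x))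
  calc _ = ∫⁻ u in Ioi 1, ∫⁻ y, ENNReal.ofReal (u ^ (-α - 1)) *
          (Ioc 0 (u * x)).indicator (fun z => ENNReal.ofReal (z ^ α)) y ∂ν := by
        refine lintegral_congr fun u => ?_
        rw [← lintegral_indicator measurableSet_Ioc,
          lintegral_const_mul _ (hf.indicator measurableSet_Ioc)]
    _ = ∫⁻ y, (∫⁻ u in Ioi 1, ENNReal.ofReal (u ^ (-α - 1)) *
          (Ioc 0 (u * x)).indicator (fun z => ENNReal.ofReal (z ^ α)) y) ∂ν :=
        lintegral_lintegral_swap hkernel.aemeasurable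
    _ = _ := by
        simp_rw [lintegral_Ioi_one_rpow_mul_indicator_Ioc hα hx]
        rw [lintegral_const_mul' _ _ ENNReal.ofReal_ne_top,
          lintegral_add_left (hf.indicator measurableSet_Ioc),
          lintegral_indicator measurableSet_Ioc, lintegral_indicator measurableSet_Ioi,
          setLIntegral_const]

theorem tendsto_measureReal_Ioi_atTop (ν : Measure ℝ) [IsFiniteMeasure ν] :
    Tendsto (fun x => ν.real (Ioi x)) atTop (𝓝 0) := by
  have hIic : Tendsto (fun x => ν.real (Iic x)) atTop (𝓝 (ν.real univ)) :=
    (ENNReal.tendsto_toReal (measure_ne_top ν univ)).comp (tendsto_measure_Iic_atTop ν)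
  simpa only [← compl_Iic, measureReal_compl measurableSet_Iic, sub_self] using
    hIic.const_sub (ν.real univ)

noncomputable def truncatedMoment (ν : Measure ℝ) (α t : ℝ) : ℝ := ∫ y in Ioc 0 t, y ^ α ∂ν

section TruncatedMoment

variable {ν : Measure ℝ} {α : ℝ}

theorem truncatedMoment_nonneg (t : ℝ) : 0 ≤ truncatedMoment ν α t :=
  setIntegral_nonneg measurableSet_Ioc fun _ hy => rpow_nonneg hy.1.le α

variable [IsFiniteMeasure ν]

theorem integrableOn_rpow_Ioc (hα : 0 ≤ α) (t : ℝ) :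
    IntegrableOn (fun y => y ^ α) (Ioc 0 t) ν :=
  Measure.integrableOn_of_bounded (M := t ^ α) (measure_ne_top ν _)
    (measurable_id.pow_const α).aestronglyMeasurable
    (ae_restrict_of_forall_mem measurableSet_Ioc fun y hy => by
      rw [norm_of_nonneg (rpow_nonneg hy.1.le α)]
      exact rpow_le_rpow hy.1.le hy.2 hα)

theorem truncatedMoment_mono (hα : 0 ≤ α) : Monotone (truncatedMoment ν α) := fun _ t hst =>
  setIntegral_mono_set (integrableOn_rpow_Ioc hα t)
    (ae_restrict_of_forall_mem measurableSet_Ioc fun _ hy => rpow_nonneg hy.1.le α)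
    (Ioc_subset_Ioc_right hst).eventuallyLE

theorem ofReal_truncatedMoment (hα : 0 ≤ α) (t : ℝ) :
    ENNReal.ofReal (truncatedMoment ν α t) = ∫⁻ y in Ioc 0 t, ENNReal.ofReal (y ^ α) ∂ν :=
  ofReal_integral_eq_lintegral_ofReal (integrableOn_rpow_Ioc hα t)
    (ae_restrict_of_forall_mem measurableSet_Ioc fun _ hy => rpow_nonneg hy.1.le α)

theorem integral_Ioi_one_rpow_mul_truncatedMoment (hα : 0 < α) {x : ℝ} (hx : 0 < x) :
    ∫ u in Ioi 1, u ^ (-α - 1) * truncatedMoment ν α (u * x) =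
      (truncatedMoment ν α x + x ^ α * ν.real (Ioi x)) / α := by
  have hmeas : Measurable fun u => u ^ (-α - 1) * truncatedMoment ν α (u * x) := by
    have := (truncatedMoment_mono (ν := ν) hα.le).measurable
    fun_prop
  have hofReal : ∀ u ∈ Ioi (1 : ℝ),
      ENNReal.ofReal (u ^ (-α - 1) * truncatedMoment ν α (u * x)) =
      ENNReal.ofReal (u ^ (-α - 1)) * ∫⁻ y in Ioc 0 (u * x), ENNReal.ofReal (y ^ α) ∂ν :=
    fun u hu => by
      rw [ENNReal.ofReal_mul (rpow_nonneg (one_pos.trans hu).le _), ofReal_truncatedMoment hα.le]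
  rw [integral_eq_lintegral_of_nonneg_ae
      (ae_restrict_of_forall_mem measurableSet_Ioi fun u (hu : 1 < u) =>
        mul_nonneg (rpow_nonneg (one_pos.trans hu).le _) (truncatedMoment_nonneg _))
      hmeas.aestronglyMeasurable,
    setLIntegral_congr_fun measurableSet_Ioi hofReal,
    lintegral_Ioi_one_rpow_mul_lintegral_Ioc hα hx, ← ofReal_truncatedMoment hα.le,
    ENNReal.toReal_mul, ENNReal.toReal_add ENNReal.ofReal_ne_top (by finiteness),
    ENNReal.toReal_mul, ENNReal.toReal_ofReal (by positivity),
    ENNReal.toReal_ofReal (truncatedMoment_nonneg x), ENNReal.toReal_ofReal (by positivity),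
    ← measureReal_def]
  ring

theorem tendsto_rpow_mul_measureReal_Ioi_add_truncatedMoment_div (hα : 0 < α) {θ : ℝ}
    (hθα : θ < α) (hRV : IsRegularlyVarying (truncatedMoment ν α) θ) :
    Tendsto (fun x => (x ^ α * ν.real (Ioi x) + truncatedMoment ν α x) / truncatedMoment ν α x)
      atTop (𝓝 (α / (α - θ))) := by
  have h := (hRV.tendsto_integral_Ioi_one (truncatedMoment_mono hα.le) truncatedMoment_nonneg
    hα hθα).const_mul α
  rw [mul_one_div] at h
  refine h.congr' ?_
  filter_upwards [eventually_gt_atTop 0, hRV.eventually_ne_zero] with x hx hne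
  simp_rw [← mul_div_assoc]
  rw [integral_div, integral_Ioi_one_rpow_mul_truncatedMoment hα hx]
  field_simp
  ring

end TruncatedMoment

theorem kendall_elementary_renewal_general
    (α θ : ℝ) (hα : 0 < α) (hθα : θ < α)
    (ν : Measure ℝ) [IsProbabilityMeasure ν]
    (F H G R : ℝ → ℝ)
    (hF : ∀ t, F t = (ν (Set.Iic t)).toReal)
    (hH : ∀ t, H t = ∫ x in Set.Ioc 0 t, x ^ α ∂ν)
    (hG : ∀ t, G t = F t - t ^ (-α) * H t)
    (hR : ∀ t, R t = G t / (1 - G t) + H t / (t ^ α * (1 - G t) ^ 2))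
    (hRV : ∀ x : ℝ, 0 < x →
      Tendsto (fun t => H (t * x) / H t) atTop (nhds (x ^ θ))) :
    Tendsto (fun x => x ^ (-α) * R x * H x) atTop
      (nhds ((α - θ) * (2 * α - θ) / α ^ 2)) := by
  obtain rfl : H = truncatedMoment ν α := funext hH
  have hRV' : IsRegularlyVarying (truncatedMoment ν α) θ := hRV
  have hG' : ∀ x, 1 - G x = ν.real (Ioi x) + x ^ (-α) * truncatedMoment ν α x := fun x => by
    rw [hG, hF, ← measureReal_def, ← compl_Iic, probReal_compl_eq_one_sub measurableSet_Iic]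
    ring
  have hGlim : Tendsto G atTop (𝓝 1) := by
    have h := ((tendsto_measureReal_Ioi_atTop ν).add (hRV'.tendsto_rpow_neg_mul
      (truncatedMoment_mono hα.le) truncatedMoment_nonneg hα hθα)).const_sub 1
    simp only [← hG', sub_sub_cancel, add_zero, sub_zero] at h
    exact h
  set E := fun x => truncatedMoment ν α x / (x ^ α * (1 - G x))
  have hE : Tendsto E atTop (𝓝 ((α - θ) / α)) := by
    have h := (tendsto_rpow_mul_measureReal_Ioi_add_truncatedMoment_div hα hθα hRV').inv₀
      (div_ne_zero hα.ne' (sub_ne_zero.2 hθα.ne'))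
    rw [inv_div] at h
    refine h.congr' ?_
    filter_upwards [eventually_gt_atTop 0] with x hx
    show _ = truncatedMoment ν α x / (x ^ α * (1 - G x))
    rw [inv_div, hG', mul_add, ← mul_assoc, ← rpow_add hx, add_neg_cancel, rpow_zero, one_mul]
  have hRE : ∀ᶠ x in atTop, G x * E x + E x ^ 2 = x ^ (-α) * R x * truncatedMoment ν α x := by
    filter_upwards [eventually_ge_atTop 0] with x hx
    simp only [E, hR, rpow_neg hx]
    generalize 1 - G x = d
    ring
  convert ((hGlim.mul hE).add (hE.pow 2)).congr' hRE using 2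
  field_simp
  ring

/-- Elementary renewal theorem for Kendall random walks: if `H ∈ RV_θ`
with `θ ∈ [0, α)`, then `x^(-α) R(x) H(x) → (α - θ)(2α - θ)/α²`. -/
theorem kendall_elementary_renewal
    (α θ : ℝ) (hα : 0 < α) (hθ0 : 0 ≤ θ) (hθα : θ < α)
    (ν : Measure ℝ) [IsProbabilityMeasure ν] (hν : ν (Set.Iic 0) = 0)
    (F H G R : ℝ → ℝ)
    (hF : ∀ t, F t = (ν (Set.Iic t)).toReal)
    (hH : ∀ t, H t = ∫ x in Set.Ioc 0 t, x ^ α ∂ν)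
    (hG : ∀ t, G t = F t - t ^ (-α) * H t)
    (hR : ∀ t, R t = G t / (1 - G t) + H t / (t ^ α * (1 - G t) ^ 2))
    (hRV : ∀ x : ℝ, 0 < x →
      Tendsto (fun t => H (t * x) / H t) atTop (nhds (x ^ θ))) :
    Tendsto (fun x => x ^ (-α) * R x * H x) atTop
      (nhds ((α - θ) * (2 * α - θ) / α ^ 2)) :=
  kendall_elementary_renewal_general α θ hα hθα ν F H G R hF hH hG hR hRV
end

section
/- If m(α) = ∫₀^∞ x^α dF(x) < ∞, then x^α (1 − F(x)) → 0, x^α (1 − G(x)) → m(α), and x^{-α} R(x) → 2/m(α) as x → ∞. -/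
/-!
The tail bound `t ^ α * ν(t, ∞) ≤ ∫_{(t, ∞)} x ^ α dν` (Markov) and the vanishing of the tail
integral of an integrable function give the first limit. Since `x ^ α (1 - G x) = x ^ α (1 - F x) + H x`
and `H → m`, the second follows, and it forces `1 - G x ~ m x ^ (-α)`, so `G → 1`. Then
`x ^ (-α) R x = G / (x ^ α (1 - G)) + H / (x ^ α (1 - G)) ^ 2 → 1 / m + m / m ^ 2 = 2 / m`.
-/

open MeasureTheory Real Filter Set Topology

section Moments

variable {ν : Measure ℝ} {α : ℝ}

lemma setIntegral_Ioi_rpow_pos (hint : IntegrableOn (fun x => x ^ α) (Ioi 0) ν)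
    (hν : ν (Ioi 0) ≠ 0) : 0 < ∫ x in Ioi 0, x ^ α ∂ν := by
  have hnonneg : 0 ≤ᵐ[ν.restrict (Ioi 0)] fun x : ℝ => x ^ α := by
    filter_upwards [ae_restrict_mem measurableSet_Ioi] with x hx
    exact rpow_nonneg (le_of_lt hx) α
  have hsupport : Function.support (fun x : ℝ => x ^ α) ∩ Ioi 0 = Ioi 0 :=
    inter_eq_right.mpr fun x hx => (rpow_pos_of_pos hx α).ne'
  rw [setIntegral_pos_iff_support_of_nonneg_ae hnonneg hint, hsupport]
  exact pos_iff_ne_zero.mpr hν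

lemma rpow_mul_measureReal_Ioi_le_setIntegral [IsFiniteMeasure ν] (hα : 0 ≤ α)
    (hint : IntegrableOn (fun x => x ^ α) (Ioi 0) ν) {t : ℝ} (ht : 0 ≤ t) :
    t ^ α * ν.real (Ioi t) ≤ ∫ x in Ioi t, x ^ α ∂ν :=
  setIntegral_ge_of_const_le_real measurableSet_Ioi (measure_ne_top ν _)
    (fun _ hx => rpow_le_rpow ht (le_of_lt hx) hα) (hint.mono_set (Ioi_subset_Ioi ht))

lemma tendsto_rpow_mul_measureReal_Ioi_atTop [IsFiniteMeasure ν] (hα : 0 ≤ α)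
    (hint : IntegrableOn (fun x => x ^ α) (Ioi 0) ν) :
    Tendsto (fun t => t ^ α * ν.real (Ioi t)) atTop (𝓝 0) := by
  refine squeeze_zero' ?_ ?_ (tendsto_integral_Ioi_zero (f := fun x => x ^ α) (μ := ν) tendsto_id)
  · filter_upwards [eventually_ge_atTop 0] with t ht
    exact mul_nonneg (rpow_nonneg ht α) measureReal_nonneg
  · filter_upwards [eventually_ge_atTop 0] with t ht
    exact rpow_mul_measureReal_Ioi_le_setIntegral hα hint ht

lemma tendsto_setIntegral_Ioc_atTop {f : ℝ → ℝ} {a : ℝ} (hf : IntegrableOn f (Ioi a) ν) :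
    Tendsto (fun t => ∫ x in Ioc a t, f x ∂ν) atTop (𝓝 (∫ x in Ioi a, f x ∂ν)) := by
  refine (intervalIntegral_tendsto_integral_Ioi a hf tendsto_id).congr' ?_
  filter_upwards [eventually_ge_atTop a] with t ht
  exact intervalIntegral.integral_of_le ht

end Moments

section Renewal

variable {α m : ℝ} {G H : ℝ → ℝ}

lemma tendsto_one_of_tendsto_rpow_mul_one_sub (hα : 0 < α)
    (hG : Tendsto (fun x => x ^ α * (1 - G x)) atTop (𝓝 m)) : Tendsto G atTop (𝓝 1) := by
  have hsub : Tendsto (fun x => 1 - G x) atTop (𝓝 0) := by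
    have := (tendsto_rpow_neg_atTop hα).mul hG
    rw [zero_mul] at this
    refine this.congr' ?_
    filter_upwards [eventually_gt_atTop 0] with x hx
    rw [← mul_assoc, ← rpow_add hx, neg_add_cancel, rpow_zero, one_mul]
  simpa using tendsto_const_nhds (x := (1 : ℝ)) |>.sub hsub

lemma inv_mul_add_div_eq (a g h : ℝ) :
    a⁻¹ * (g / (1 - g) + h / (a * (1 - g) ^ 2)) = g / (a * (1 - g)) + h / (a * (1 - g)) ^ 2 := by
  simp only [div_eq_mul_inv, mul_inv, ← inv_pow]
  ring

lemma tendsto_rpow_neg_mul_renewal (hα : 0 < α) (hm : m ≠ 0) (hH : Tendsto H atTop (𝓝 m))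
    (hG : Tendsto (fun x => x ^ α * (1 - G x)) atTop (𝓝 m)) :
    Tendsto (fun x => x ^ (-α) * (G x / (1 - G x) + H x / (x ^ α * (1 - G x) ^ 2)))
      atTop (𝓝 (2 / m)) := by
  have hlim := ((tendsto_one_of_tendsto_rpow_mul_one_sub hα hG).div hG hm).add
    (hH.div (hG.pow 2) (pow_ne_zero 2 hm))
  rw [show 1 / m + m / m ^ 2 = 2 / m by field_simp; ring] at hlim
  refine hlim.congr' ?_
  filter_upwards [eventually_gt_atTop 0] with x hx
  rw [rpow_neg hx.le, inv_mul_add_div_eq]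
  rfl

end Renewal

/-- If the α-moment `m(α) = ∫ x^α dF < ∞`, then `x^α(1-F(x)) → 0`,
`x^α(1-G(x)) → m(α)` and `x^(-α) R(x) → 2/m(α)`. -/
theorem kendall_renewal_finite_moment
    (α : ℝ) (hα : 0 < α)
    (ν : Measure ℝ) [IsProbabilityMeasure ν] (hν : ν (Set.Iic 0) = 0)
    (F H G R : ℝ → ℝ)
    (hF : ∀ t, F t = (ν (Set.Iic t)).toReal)
    (hH : ∀ t, H t = ∫ x in Set.Ioc 0 t, x ^ α ∂ν)
    (hG : ∀ t, G t = F t - t ^ (-α) * H t)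
    (hR : ∀ t, R t = G t / (1 - G t) + H t / (t ^ α * (1 - G t) ^ 2))
    (hint : IntegrableOn (fun x => x ^ α) (Set.Ioi 0) ν)
    (m : ℝ) (hm : m = ∫ x in Set.Ioi 0, x ^ α ∂ν) :
    Tendsto (fun x => x ^ α * (1 - F x)) atTop (nhds 0) ∧
    Tendsto (fun x => x ^ α * (1 - G x)) atTop (nhds m) ∧
    Tendsto (fun x => x ^ (-α) * R x) atTop (nhds (2 / m)) := by
  have hν_Ioi : ν (Ioi 0) ≠ 0 := by
    rw [← compl_Iic, prob_compl_eq_one_sub measurableSet_Iic, hν, tsub_zero]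
    exact one_ne_zero
  have hm_ne : m ≠ 0 := hm ▸ (setIntegral_Ioi_rpow_pos hint hν_Ioi).ne'
  have hH_lim : Tendsto H atTop (𝓝 m) :=
    hm ▸ (tendsto_setIntegral_Ioc_atTop hint).congr fun t => (hH t).symm
  have hF_tail : ∀ t, 1 - F t = ν.real (Ioi t) := fun t => by
    rw [hF, ← compl_Iic, probReal_compl_eq_one_sub measurableSet_Iic, measureReal_def]
  have hF_lim : Tendsto (fun x => x ^ α * (1 - F x)) atTop (𝓝 0) := by
    simpa only [hF_tail] using tendsto_rpow_mul_measureReal_Ioi_atTop hα.le hint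
  have hG_lim : Tendsto (fun x => x ^ α * (1 - G x)) atTop (𝓝 m) := by
    refine (zero_add m ▸ hF_lim.add hH_lim).congr' ?_
    filter_upwards [eventually_gt_atTop 0] with x hx
    have hcancel : x ^ α * x ^ (-α) = 1 := by rw [← rpow_add hx, add_neg_cancel, rpow_zero]
    rw [hG]
    linear_combination (-H x) * hcancel
  refine ⟨hF_lim, hG_lim, ?_⟩
  simpa only [hR] using tendsto_rpow_neg_mul_renewal hα hm_ne hH_lim hG_lim
end

section
/- Blackwell-type theorem (derivative form): suppose F has density f, H(t) = ∫₀^t y^α f(y) dy, and t H'(t)/H(t) → θ with 0 ≤ θ < α as t → ∞. Then H(t) R'(t) / t^{α−1} → ((α−θ)/α)² (2α − θ) as t → ∞, where R'(t) = f(t)/(1−G(t))² + 2α H(t)²/(t^{2α+1}(1−G(t))³). -/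
/-!
Writing `q = t·t^α f/H` and `K = H/(t^α(1 - G))`, one has the identity
`H R'/t^(α-1) = q K² + 2α K³`, and `q → θ` by assumption. Since
`t^α (1 - G) = t^α (1 - F) + H`, everything reduces to `t^α (1 - F(t))/H(t) → θ/(α - θ)`.

For small `δ > 0` the assumption on `q` gives eventually `(θ - δ) H ≤ y H'(y) ≤ (θ + δ) H`.
A Grönwall argument turns this into the Potter-type bounds
`H(t) (y/t)^(θ - δ) ≤ H(y) ≤ H(t) (y/t)^(θ + δ)` for `y ≥ t ≥ T`, and inserting them into
`f(y) = y H'(y)/y^(α + 1)` and integrating over `(t, ∞)` squeezes `t^α (1 - F(t))/H(t)` between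
`(θ - δ)/(α - θ + δ)` and `(θ + δ)/(α - θ - δ)`.
-/

open MeasureTheory Real Filter Set Topology

theorem le_mul_div_rpow_of_le_add_integral {u : ℝ → ℝ} {T s c : ℝ} (hT : 0 < T) (hc : 0 ≤ c)
    (hTs : T ≤ s) (hu : ContinuousOn u (Icc T s))
    (h : ∀ x ∈ Icc T s, u x ≤ u T + c * ∫ y in T..x, u y / y) :
    u s ≤ u T * (s / T) ^ c := by
  set v : ℝ → ℝ := fun x => u T + c * ∫ y in T..x, u y / y
  have hpos : ∀ x ∈ Icc T s, 0 < x := fun x hx => hT.trans_le hx.1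
  have hk : ContinuousOn (fun y => u y / y) (Icc T s) :=
    hu.div continuousOn_id fun y hy => (hpos y hy).ne'
  have hv : ContinuousOn v (Icc T s) := by
    have := intervalIntegral.continuousOn_primitive_interval (μ := volume)
      ((uIcc_of_le hTs).symm ▸ hk.integrableOn_Icc)
    rw [uIcc_of_le hTs] at this
    exact continuousOn_const.add (continuousOn_const.mul this)
  have hv' : ∀ x ∈ Ioo T s, HasDerivAt v (c * (u x / x)) x := fun x hx =>
    ((intervalIntegral.integral_hasDerivAt_right
      ((hk.mono (Icc_subset_Icc le_rfl hx.2.le)).intervalIntegrable_of_Icc hx.1.le)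
      ((hk.mono Ioo_subset_Icc_self).stronglyMeasurableAtFilter isOpen_Ioo x hx)
      (hk.continuousAt (Icc_mem_nhds hx.1 hx.2))).const_mul c).const_add _
  -- `v x * x ^ (-c)` has derivative `c * x ^ (-c - 1) * (u x - v x) ≤ 0`
  have hanti : AntitoneOn (fun x => v x * x ^ (-c)) (Icc T s) := by
    refine antitoneOn_of_hasDerivWithinAt_nonpos (convex_Icc T s)
      (hv.mul (continuousOn_id.rpow_const fun x hx => Or.inl (hpos x hx).ne'))
      (f' := fun x => c * (u x / x) * x ^ (-c) + v x * (-c * x ^ (-c - 1))) ?_ ?_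
    · rw [interior_Icc]
      intro x hx
      exact ((hv' x hx).mul (hasDerivAt_rpow_const
        (Or.inl (hpos x (Ioo_subset_Icc_self hx)).ne'))).hasDerivWithinAt
    · rw [interior_Icc]
      intro x hx
      have hx0 := hpos x (Ioo_subset_Icc_self hx)
      have hux := h x (Ioo_subset_Icc_self hx)
      rw [rpow_sub_one hx0.ne']
      have : 0 ≤ x ^ (-c) / x := by positivity
      have key : c * (u x / x) * x ^ (-c) + v x * (-c * (x ^ (-c) / x)) =
          c * (x ^ (-c) / x) * (u x - v x) := by ring
      rw [key]
      exact mul_nonpos_of_nonneg_of_nonpos (mul_nonneg hc this) (by simpa [v] using hux)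
  have hTmem : T ∈ Icc T s := left_mem_Icc.2 hTs
  have hsmem : s ∈ Icc T s := right_mem_Icc.2 hTs
  have hs := hpos s hsmem
  have hvT : v T = u T := by simp [v]
  calc u s ≤ v s := h s hsmem
    _ = v s * s ^ (-c) * s ^ c := by
      rw [rpow_neg hs.le, mul_assoc, inv_mul_cancel₀ (rpow_pos_of_pos hs c).ne', mul_one]
    _ ≤ v T * T ^ (-c) * s ^ c :=
      mul_le_mul_of_nonneg_right (hanti hTmem hsmem hTs) (rpow_pos_of_pos hs c).le
    _ = u T * (s / T) ^ c := by rw [hvT, div_rpow hs.le hT.le, rpow_neg hT.le]; ring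

theorem le_mul_div_rpow_of_mul_le {H g : ℝ → ℝ} {T s c : ℝ} (hT : 0 < T) (hc : 0 ≤ c)
    (hTs : T ≤ s) (hg : IntervalIntegrable g volume T s)
    (hH : ∀ x ∈ Icc T s, H x = H T + ∫ y in T..x, g y)
    (hbound : ∀ y ∈ Icc T s, y * g y ≤ c * H y) :
    H s ≤ H T * (s / T) ^ c := by
  have hcont : ContinuousOn H (Icc T s) := by
    have := intervalIntegral.continuousOn_primitive_interval' hg left_mem_uIcc
    rw [uIcc_of_le hTs] at this
    exact (continuousOn_const.add this).congr hH
  refine le_mul_div_rpow_of_le_add_integral hT hc hTs hcont fun x hx => ?_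
  have hsub : Icc T x ⊆ Icc T s := Icc_subset_Icc le_rfl hx.2
  rw [hH x hx, ← intervalIntegral.integral_const_mul]
  gcongr
  refine intervalIntegral.integral_mono_on hx.1 (hg.mono_set ?_) ?_ fun y hy => ?_
  · rw [uIcc_of_le hTs, uIcc_of_le hx.1]; exact hsub
  · refine (continuousOn_const.mul ((hcont.mono hsub).div continuousOn_id fun y hy => ?_)
      ).intervalIntegrable_of_Icc hx.1
    exact (hT.trans_le hy.1).ne'
  · rw [mul_div_assoc', le_div_iff₀ (hT.trans_le hy.1), mul_comm]
    exact hbound y (hsub hy)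

theorem mul_div_rpow_le_of_le_mul {H g : ℝ → ℝ} {T s c : ℝ} (hT : 0 < T) (hc : 0 ≤ c)
    (hTs : T ≤ s) (hg : IntervalIntegrable g volume T s)
    (hH : ∀ x ∈ Icc T s, H x = H T + ∫ y in T..x, g y)
    (hbound : ∀ y ∈ Icc T s, c * H y ≤ y * g y) :
    H T * (s / T) ^ c ≤ H s := by
  have := le_mul_div_rpow_of_mul_le (H := -H) (g := -g) hT hc hTs hg.neg
    (fun x hx => by simp [hH x hx, intervalIntegral.integral_neg]; ring)
    (fun y hy => by simpa using hbound y hy)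
  simpa using this

theorem toReal_withDensity_le_setIntegral {X : Type*} [MeasurableSpace X] {μ : Measure X}
    {f φ : X → ℝ} {s : Set X} (hs : MeasurableSet s) (hφ : IntegrableOn φ s μ)
    (hφ0 : ∀ x ∈ s, 0 ≤ φ x) (h : ∀ x ∈ s, f x ≤ φ x) :
    (μ.withDensity (fun x => ENNReal.ofReal (f x)) s).toReal ≤ ∫ x in s, φ x ∂μ := by
  rw [withDensity_apply _ hs]
  refine ENNReal.toReal_le_of_le_ofReal (setIntegral_nonneg hs hφ0) ?_
  rw [ofReal_integral_eq_lintegral_ofReal hφ ((ae_restrict_iff' hs).2 (ae_of_all _ hφ0))]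
  exact setLIntegral_mono' hs fun x hx => ENNReal.ofReal_le_ofReal (h x hx)

theorem setIntegral_le_toReal_withDensity {X : Type*} [MeasurableSpace X] {μ : Measure X}
    {f φ : X → ℝ} {s : Set X} (hs : MeasurableSet s) (hφ : IntegrableOn φ s μ)
    (hφ0 : ∀ x ∈ s, 0 ≤ φ x) (hfin : μ.withDensity (fun x => ENNReal.ofReal (f x)) s ≠ ⊤)
    (h : ∀ x ∈ s, φ x ≤ f x) :
    ∫ x in s, φ x ∂μ ≤ (μ.withDensity (fun x => ENNReal.ofReal (f x)) s).toReal := by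
  rw [← ENNReal.ofReal_le_iff_le_toReal hfin, withDensity_apply _ hs,
    ofReal_integral_eq_lintegral_ofReal hφ ((ae_restrict_iff' hs).2 (ae_of_all _ hφ0))]
  exact setLIntegral_mono' hs fun x hx => ENNReal.ofReal_le_ofReal (h x hx)

theorem div_rpow_div_rpow_eq {y t c α : ℝ} (hy : 0 < y) (ht : 0 < t) :
    (y / t) ^ c / y ^ (α + 1) = t ^ (-c) * y ^ (c - (α + 1)) := by
  rw [div_rpow hy.le ht.le, rpow_neg ht.le, rpow_sub hy]; ring

theorem integrableOn_Ioi_div_rpow {t c α : ℝ} (ht : 0 < t) (hcα : c < α) :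
    IntegrableOn (fun y => (y / t) ^ c / y ^ (α + 1)) (Ioi t) :=
  IntegrableOn.congr_fun
    ((integrableOn_Ioi_rpow_of_lt (a := c - (α + 1)) (by linarith) ht).const_mul (t ^ (-c)))
    (fun y hy => (div_rpow_div_rpow_eq (ht.trans hy) ht).symm) measurableSet_Ioi

theorem integral_Ioi_div_rpow {t c α : ℝ} (ht : 0 < t) (hcα : c < α) :
    ∫ y in Ioi t, (y / t) ^ c / y ^ (α + 1) = (α - c)⁻¹ / t ^ α := by
  rw [setIntegral_congr_fun measurableSet_Ioi fun y hy => div_rpow_div_rpow_eq (ht.trans hy) ht,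
    integral_const_mul, integral_Ioi_rpow_of_lt (by linarith) ht,
    show c - (α + 1) + 1 = c - α by ring, rpow_sub ht, rpow_neg ht.le]
  have : t ^ c ≠ 0 := (rpow_pos_of_pos ht c).ne'
  rw [neg_div, ← div_neg, neg_sub]
  field_simp

theorem tendsto_of_tendsto_of_tendsto_of_eventually_mem_Icc {ι κ β : Type*}
    [TopologicalSpace β] [LinearOrder β] [OrderTopology β] {p : Filter ι} [p.NeBot]
    {q : Filter κ} {A : κ → β} {l u : ι → β} {L : β} (hl : Tendsto l p (𝓝 L))
    (hu : Tendsto u p (𝓝 L)) (h : ∀ᶠ i in p, ∀ᶠ k in q, A k ∈ Icc (l i) (u i)) :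
    Tendsto A q (𝓝 L) := by
  refine tendsto_order.2 ⟨fun a ha => ?_, fun b hb => ?_⟩
  · obtain ⟨i, hi, hai⟩ := (h.and (hl.eventually (eventually_gt_nhds ha))).exists
    exact hi.mono fun k hk => hai.trans_le hk.1
  · obtain ⟨i, hi, hib⟩ := (h.and (hu.eventually (eventually_lt_nhds hb))).exists
    exact hi.mono fun k hk => hk.2.trans_lt hib

section Tail

variable {α c T t : ℝ} {f H : ℝ → ℝ}

theorem eq_add_integral_of_intervalIntegrable {g : ℝ → ℝ} {x : ℝ}
    (hH : ∀ t, H t = ∫ y in 0..t, g y) (ht : IntervalIntegrable g volume 0 t)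
    (hx : IntervalIntegrable g volume 0 x) : H x = H t + ∫ y in t..x, g y := by
  rw [hH, hH, intervalIntegral.integral_add_adjacent_intervals ht (ht.symm.trans hx)]

theorem rpow_mul_toReal_withDensity_Ioi_le (hT : 0 < T) (hc : 0 ≤ c) (hcα : c < α)
    (hH : ∀ t, H t = ∫ y in 0..t, y ^ α * f y)
    (hint : ∀ y ≥ T, IntervalIntegrable (fun y => y ^ α * f y) volume 0 y)
    (hbound : ∀ y ≥ T, y * (y ^ α * f y) ≤ c * H y) (ht : T ≤ t) (hHt : 0 ≤ H t) :
    t ^ α * (volume.withDensity (fun x => ENNReal.ofReal (f x)) (Ioi t)).toReal ≤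
      c / (α - c) * H t := by
  have ht0 : 0 < t := hT.trans_le ht
  have hf : ∀ y ∈ Ioi t, f y ≤ c * H t * ((y / t) ^ c / y ^ (α + 1)) := fun y hy => by
    have hy0 : 0 < y := ht0.trans hy
    have hpotter : H y ≤ H t * (y / t) ^ c :=
      le_mul_div_rpow_of_mul_le ht0 hc hy.le ((hint t ht).symm.trans (hint y (ht.trans hy.le)))
        (fun x hx => eq_add_integral_of_intervalIntegrable hH (hint t ht) (hint x (ht.trans hx.1)))
        fun x hx => hbound x (ht.trans hx.1)
    rw [mul_div_assoc', le_div_iff₀ (by positivity), rpow_add_one hy0.ne']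
    calc f y * (y ^ α * y) = y * (y ^ α * f y) := by ring
      _ ≤ c * H y := hbound y (ht.trans hy.le)
      _ ≤ c * (H t * (y / t) ^ c) := by gcongr
      _ = c * H t * (y / t) ^ c := by ring
  calc _ ≤ t ^ α * ∫ y in Ioi t, c * H t * ((y / t) ^ c / y ^ (α + 1)) := by
        gcongr
        refine toReal_withDensity_le_setIntegral measurableSet_Ioi
          ((integrableOn_Ioi_div_rpow ht0 hcα).const_mul _) (fun y hy => ?_) hf
        have : 0 < y := ht0.trans hy
        positivity
    _ = c / (α - c) * H t := by
        rw [integral_const_mul, integral_Ioi_div_rpow ht0 hcα]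
        have : t ^ α ≠ 0 := (rpow_pos_of_pos ht0 α).ne'
        field_simp

theorem le_rpow_mul_toReal_withDensity_Ioi
    [IsFiniteMeasure (volume.withDensity fun x => ENNReal.ofReal (f x))]
    (hT : 0 < T) (hc : 0 ≤ c) (hcα : c < α)
    (hH : ∀ t, H t = ∫ y in 0..t, y ^ α * f y)
    (hint : ∀ y ≥ T, IntervalIntegrable (fun y => y ^ α * f y) volume 0 y)
    (hbound : ∀ y ≥ T, c * H y ≤ y * (y ^ α * f y)) (ht : T ≤ t) (hHt : 0 ≤ H t) :
    c / (α - c) * H t ≤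
      t ^ α * (volume.withDensity (fun x => ENNReal.ofReal (f x)) (Ioi t)).toReal := by
  have ht0 : 0 < t := hT.trans_le ht
  have hf : ∀ y ∈ Ioi t, c * H t * ((y / t) ^ c / y ^ (α + 1)) ≤ f y := fun y hy => by
    have hy0 : 0 < y := ht0.trans hy
    have hpotter : H t * (y / t) ^ c ≤ H y :=
      mul_div_rpow_le_of_le_mul ht0 hc hy.le ((hint t ht).symm.trans (hint y (ht.trans hy.le)))
        (fun x hx => eq_add_integral_of_intervalIntegrable hH (hint t ht) (hint x (ht.trans hx.1)))
        fun x hx => hbound x (ht.trans hx.1)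
    rw [mul_div_assoc', div_le_iff₀ (by positivity), rpow_add_one hy0.ne']
    calc c * H t * (y / t) ^ c = c * (H t * (y / t) ^ c) := by ring
      _ ≤ c * H y := by gcongr
      _ ≤ y * (y ^ α * f y) := hbound y (ht.trans hy.le)
      _ = f y * (y ^ α * y) := by ring
  calc c / (α - c) * H t = t ^ α * ∫ y in Ioi t, c * H t * ((y / t) ^ c / y ^ (α + 1)) := by
        rw [integral_const_mul, integral_Ioi_div_rpow ht0 hcα]
        have : t ^ α ≠ 0 := (rpow_pos_of_pos ht0 α).ne'
        field_simp
    _ ≤ _ := by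
        gcongr
        refine setIntegral_le_toReal_withDensity measurableSet_Ioi
          ((integrableOn_Ioi_div_rpow ht0 hcα).const_mul _) (fun y hy => ?_) (measure_ne_top _ _) hf
        have : 0 < y := ht0.trans hy
        positivity

theorem eventually_pos_and_intervalIntegrable {g : ℝ → ℝ} (hg : ∀ y, 0 ≤ y → 0 ≤ g y)
    (hH : ∀ t, H t = ∫ y in 0..t, g y) (hne : ∀ᶠ t in atTop, H t ≠ 0) :
    ∀ᶠ t in atTop, 0 < H t ∧ IntervalIntegrable g volume 0 t := by
  filter_upwards [hne, eventually_ge_atTop 0] with t hHt ht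
  have hint : IntervalIntegrable g volume 0 t := by
    by_contra hni
    exact hHt (by rw [hH, intervalIntegral.integral_undef hni])
  exact ⟨(hH t ▸ intervalIntegral.integral_nonneg ht fun y hy => hg y hy.1).lt_of_ne' hHt, hint⟩

theorem tendsto_rpow_mul_toReal_withDensity_Ioi_div {θ : ℝ}
    [IsFiniteMeasure (volume.withDensity fun x => ENNReal.ofReal (f x))]
    (hθ0 : 0 ≤ θ) (hθα : θ < α) (hf0 : ∀ x, 0 ≤ f x)
    (hH : ∀ t, H t = ∫ y in 0..t, y ^ α * f y)
    (hHi : ∀ᶠ t in atTop, 0 < H t ∧ IntervalIntegrable (fun y => y ^ α * f y) volume 0 t)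
    (hlim : Tendsto (fun t => t * (t ^ α * f t) / H t) atTop (𝓝 θ)) :
    Tendsto (fun t => t ^ α *
        (volume.withDensity (fun x => ENNReal.ofReal (f x)) (Ioi t)).toReal / H t)
      atTop (𝓝 (θ / (α - θ))) := by
  have hφ : ContinuousAt (fun c => c / (α - c)) θ :=
    continuousAt_id.div (continuousAt_const.sub continuousAt_id) (sub_ne_zero.2 hθα.ne')
  have hlower : Tendsto (fun δ => max (θ - δ) 0) (𝓝[>] 0) (𝓝 θ) := by
    have : Continuous fun δ : ℝ => max (θ - δ) 0 := by fun_prop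
    simpa [hθ0] using this.continuousAt.tendsto.mono_left (nhdsWithin_le_nhds (a := (0 : ℝ)))
  have hupper : Tendsto (fun δ => θ + δ) (𝓝[>] 0) (𝓝 θ) := by
    have : Continuous fun δ : ℝ => θ + δ := by fun_prop
    simpa using this.continuousAt.tendsto.mono_left (nhdsWithin_le_nhds (a := (0 : ℝ)))
  refine tendsto_of_tendsto_of_tendsto_of_eventually_mem_Icc (hφ.tendsto.comp hlower)
    (hφ.tendsto.comp hupper) ?_
  filter_upwards [self_mem_nhdsWithin,
    (eventually_lt_nhds (sub_pos.2 hθα)).filter_mono nhdsWithin_le_nhds] with δ hδ hδα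
  rw [mem_Ioi] at hδ
  have hband : ∀ᶠ y in atTop, max (θ - δ) 0 * H y ≤ y * (y ^ α * f y) ∧
      y * (y ^ α * f y) ≤ (θ + δ) * H y := by
    filter_upwards [hlim.eventually (Ioo_mem_nhds (sub_lt_self θ hδ) (lt_add_of_pos_right θ hδ)),
      hHi, eventually_ge_atTop 0] with y hy hHy hy0
    rw [lt_div_iff₀ hHy.1, div_lt_iff₀ hHy.1] at hy
    rw [max_mul_of_nonneg _ _ hHy.1.le, zero_mul]
    exact ⟨max_le hy.1.le (by have := hf0 y; positivity), hy.2.le⟩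
  obtain ⟨T, hT⟩ := eventually_atTop.1 ((hHi.and hband).and (eventually_gt_atTop 0))
  have hT0 : 0 < T := (hT T le_rfl).2
  have hint := fun y hy => (hT y hy).1.1.2
  have hlow := fun y hy => (hT y hy).1.2.1
  have hup := fun y hy => (hT y hy).1.2.2
  filter_upwards [eventually_ge_atTop T] with t ht
  have hHt := (hT t ht).1.1.1
  rw [Function.comp_apply, Function.comp_apply, mem_Icc, le_div_iff₀ hHt, div_le_iff₀ hHt]
  exact ⟨le_rpow_mul_toReal_withDensity_Ioi hT0 (le_max_right _ _)
      (max_lt (by linarith) (by linarith)) hH hint hlow ht hHt.le,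
    rpow_mul_toReal_withDensity_Ioi_le hT0 (by linarith) (by linarith) hH hint hup ht hHt.le⟩

end Tail

theorem rpow_mul_one_sub_eq {ν : Measure ℝ} [IsProbabilityMeasure ν] {α t F G H : ℝ}
    (hF : F = (ν (Iic t)).toReal) (hG : G = F - t ^ (-α) * H) (ht : 0 < t) :
    t ^ α * (1 - G) = t ^ α * (ν (Ioi t)).toReal + H := by
  have htail : 1 - F = (ν (Ioi t)).toReal := by
    rw [hF, ← compl_Iic]
    exact (probReal_compl_eq_one_sub measurableSet_Iic).symm
  have : t ^ α ≠ 0 := (rpow_pos_of_pos ht α).ne'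
  rw [hG, sub_sub_eq_add_sub, add_sub_right_comm, htail, rpow_neg ht.le]
  field_simp

theorem blackwell_ratio_eq {α t h d x : ℝ} (ht : 0 < t) (hh : h ≠ 0) (hx : x ≠ 0) :
    h * (d / x ^ 2 + 2 * α * h ^ 2 / (t ^ (2 * α + 1) * x ^ 3)) / t ^ (α - 1) =
      t * (t ^ α * d) / h * (h / (t ^ α * x)) ^ 2 + 2 * α * (h / (t ^ α * x)) ^ 3 := by
  have htα : t ^ α ≠ 0 := (rpow_pos_of_pos ht α).ne'
  rw [show 2 * α + 1 = α + α + 1 by ring, rpow_add_one ht.ne', rpow_add ht, rpow_sub_one ht.ne']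
  field_simp

theorem kendall_blackwell_derivative_general
    (α θ : ℝ) (hθ0 : 0 ≤ θ) (hθα : θ < α)
    (f : ℝ → ℝ) (hf0 : ∀ x, 0 ≤ f x)
    (ν : Measure ℝ) (hν : ν = volume.withDensity (fun x => ENNReal.ofReal (f x)))
    [IsProbabilityMeasure ν]
    (F H G R' : ℝ → ℝ)
    (hF : ∀ t, F t = (ν (Set.Iic t)).toReal)
    (hH : ∀ t, H t = ∫ y in (0 : ℝ)..t, y ^ α * f y)
    (hG : ∀ t, G t = F t - t ^ (-α) * H t)
    (hR' : ∀ t, R' t = f t / (1 - G t) ^ 2 +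
      2 * α * H t ^ 2 / (t ^ (2 * α + 1) * (1 - G t) ^ 3))
    (hRV : ∀ x : ℝ, 0 < x →
      Tendsto (fun t => H (t * x) / H t) atTop (nhds (x ^ θ)))
    (hlim : Tendsto (fun t => t * (t ^ α * f t) / H t) atTop (nhds θ)) :
    Tendsto (fun t => H t * R' t / t ^ (α - 1)) atTop
      (nhds (((α - θ) / α) ^ 2 * (2 * α - θ))) := by
  subst hν
  have hα : 0 < α := hθ0.trans_lt hθα
  have hne : ∀ᶠ t in atTop, H t ≠ 0 := by
    filter_upwards [(hRV 1 one_pos).eventually_ne (by simp : (1 : ℝ) ^ θ ≠ 0)] with t ht h0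
    simp [h0] at ht
  have hHi := eventually_pos_and_intervalIntegrable
    (fun y hy => mul_nonneg (rpow_nonneg hy α) (hf0 y)) hH hne
  have hA := tendsto_rpow_mul_toReal_withDensity_Ioi_div hθ0 hθα hf0 hH hHi hlim
  have hsplit : ∀ᶠ t in atTop, 0 < t ∧ 0 < H t ∧ t ^ α * (1 - G t) =
      t ^ α * (volume.withDensity (fun x => ENNReal.ofReal (f x)) (Ioi t)).toReal + H t := by
    filter_upwards [hHi, eventually_gt_atTop 0] with t hHt ht
    exact ⟨ht, hHt.1, rpow_mul_one_sub_eq (hF t) (hG t) ht⟩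
  have hK : Tendsto (fun t => H t / (t ^ α * (1 - G t))) atTop (𝓝 ((α - θ) / α)) := by
    have hαθ : 0 < α - θ := sub_pos.2 hθα
    rw [show (α - θ) / α = 1 / (θ / (α - θ) + 1) by field_simp; ring]
    refine (tendsto_const_nhds.div (hA.add_const 1) (by positivity)).congr' ?_
    filter_upwards [hsplit] with t ⟨ht, hHt, h1G⟩
    rw [h1G, Pi.div_apply]
    field_simp
  convert ((hlim.mul (hK.pow 2)).add ((hK.pow 3).const_mul (2 * α))).congr' ?_ using 2
  · field_simp
    ring
  · filter_upwards [hsplit] with t ⟨ht, hHt, h1G⟩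
    have h1G0 : 1 - G t ≠ 0 :=
      right_ne_zero_of_mul (h1G ▸ by positivity : t ^ α * (1 - G t) ≠ 0)
    rw [hR', blackwell_ratio_eq ht hHt.ne' h1G0]

/-- Blackwell-type theorem, derivative form: if `F` has density `f`,
`H ∈ RV_θ` and `t H'(t)/H(t) → θ` with `0 ≤ θ < α`, then
`H(t) R'(t)/t^(α-1) → ((α-θ)/α)² (2α-θ)`. -/
theorem kendall_blackwell_derivative
    (α θ : ℝ) (hα : 0 < α) (hθ0 : 0 ≤ θ) (hθα : θ < α)
    (f : ℝ → ℝ) (hf0 : ∀ x, 0 ≤ f x) (hfneg : ∀ x ≤ 0, f x = 0)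
    (ν : Measure ℝ) (hν : ν = volume.withDensity (fun x => ENNReal.ofReal (f x)))
    [IsProbabilityMeasure ν]
    (F H G R' : ℝ → ℝ)
    (hF : ∀ t, F t = (ν (Set.Iic t)).toReal)
    (hH : ∀ t, H t = ∫ y in (0 : ℝ)..t, y ^ α * f y)
    (hG : ∀ t, G t = F t - t ^ (-α) * H t)
    (hR' : ∀ t, R' t = f t / (1 - G t) ^ 2 +
      2 * α * H t ^ 2 / (t ^ (2 * α + 1) * (1 - G t) ^ 3))
    (hRV : ∀ x : ℝ, 0 < x →
      Tendsto (fun t => H (t * x) / H t) atTop (nhds (x ^ θ)))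
    (hlim : Tendsto (fun t => t * (t ^ α * f t) / H t) atTop (nhds θ)) :
    Tendsto (fun t => H t * R' t / t ^ (α - 1)) atTop
      (nhds (((α - θ) / α) ^ 2 * (2 * α - θ))) :=
  kendall_blackwell_derivative_general α θ hθ0 hθα f hf0 ν hν F H G R' hF hH hG hR' hRV hlim
end

section
/- Characteristic function of the Kendall renewal counting variable: for fixed t with G(t) < 1, the Fourier transform of N(t) satisfies E[e^{iuN(t)}] = 1 + (e^{iu} − 1)(F(t) − e^{iu}G(t)²)/(1 − e^{iu}G(t))². -/
/-! Summation by parts turns `∑ zⁿ (Fₙ - Fₙ₊₁)` into `F₀ + (z - 1) ∑ zᵐ Fₘ₊₁`. With `q = z G`,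
the Kendall formula gives `zᵐ Fₘ₊₁ = ((m + 1)(F - G) + G) qᵐ`, an affine-in-`m` multiple of a
geometric sequence, summing to `(F - G)/(1 - q)² + G/(1 - q) = (F - z G²)/(1 - q)²`. -/

theorem hasSum_affine_mul_geometric_of_norm_lt_one {𝕜 : Type*} [NormedDivisionRing 𝕜]
    [HasSummableGeomSeries 𝕜]     {q : 𝕜} (hq : ‖q‖ < 1) (a b : 𝕜) :
    HasSum (fun m : ℕ => (a * (m + 1) + b) * q ^ m) (a / (1 - q) ^ 2 + b / (1 - q)) := by
  have hlin : HasSum (fun m : ℕ => ((m : 𝕜) + 1) * q ^ m) (1 / (1 - q) ^ 2) := by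
    simpa using hasSum_choose_mul_geometric_of_norm_lt_one 1 hq
  have hgeom : HasSum (fun m : ℕ => q ^ m) (1 - q)⁻¹ := hasSum_geometric_of_norm_lt_one hq
  have hsum := ((hlin.mul_left a).add (hgeom.mul_left b)).congr_fun fun m : ℕ =>
    show (a * (m + 1) + b) * q ^ m = _ by simp only [add_mul, mul_assoc]
  rwa [mul_one_div, ← div_eq_mul_inv] at hsum

theorem HasSum.pow_mul_sub_succ {R : Type*} [CommRing R] [TopologicalSpace R]
    [IsTopologicalRing R] {F : ℕ → R} {z S : R} (h : HasSum (fun m : ℕ => z ^ m * F (m + 1)) S) :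
    HasSum (fun n : ℕ => z ^ n * (F n - F (n + 1))) (F 0 + (z - 1) * S) := by
  have hshift : HasSum (fun n : ℕ => z ^ n * F n) (F 0 + z * S) := by
    rw [← hasSum_nat_add_iff' 1]
    simpa [pow_succ, mul_assoc, mul_left_comm z] using h.mul_left z
  have hdiff := (hshift.sub h).congr_fun fun n => mul_sub (z ^ n) (F n) (F (n + 1))
  rwa [add_sub_assoc, ← sub_one_mul] at hdiff

theorem kendall_renewal_charfun_general
    (Ft Gt : ℝ) (hG0 : 0 ≤ Gt) (hG1 : Gt < 1)
    (Fn : ℕ → ℝ) (hF0 : Fn 0 = 1)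
    (hFn : ∀ n : ℕ, 1 ≤ n → Fn n = Gt ^ (n - 1) * (n * (Ft - Gt) + Gt))
    (p : ℕ → ℝ) (hp : ∀ n, p n = Fn n - Fn (n + 1)) (u : ℝ) :
    ∑' n : ℕ, Complex.exp (Complex.I * u * n) * (p n : ℂ)
      = 1 + (Complex.exp (Complex.I * u) - 1) *
          ((Ft : ℂ) - Complex.exp (Complex.I * u) * (Gt : ℂ) ^ 2) /
          (1 - Complex.exp (Complex.I * u) * (Gt : ℂ)) ^ 2 := by
  set z : ℂ := Complex.exp (Complex.I * u)
  have hq : ‖z * Gt‖ < 1 := by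
    rwa [norm_mul, Complex.norm_exp_I_mul_ofReal, one_mul, Complex.norm_real,
      Real.norm_of_nonneg hG0]
  have hq1 : 1 - z * Gt ≠ 0 := sub_ne_zero.mpr fun h => by simp [← h] at hq
  have htail : HasSum (fun m : ℕ => z ^ m * (Fn (m + 1) : ℂ))
      ((Ft - Gt) / (1 - z * Gt) ^ 2 + Gt / (1 - z * Gt)) := by
    refine (hasSum_affine_mul_geometric_of_norm_lt_one hq ((Ft : ℂ) - Gt) Gt).congr_fun
      fun m => ?_
    rw [hFn (m + 1) m.succ_pos, Nat.add_sub_cancel]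
    push_cast
    ring
  have hpow : ∀ n : ℕ, Complex.exp (Complex.I * u * n) = z ^ n := fun n => by
    rw [← Complex.exp_nat_mul, mul_comm]
  simp only [hpow, hp, Complex.ofReal_sub]
  rw [(htail.pow_mul_sub_succ (F := fun n => (Fn n : ℂ))).tsum_eq, hF0, Complex.ofReal_one]
  field_simp
  ring

/-- Characteristic function of the Kendall renewal counting variable `N(t)`:
`E e^{iuN(t)} = 1 + (e^{iu}-1)(F(t) - e^{iu}G(t)²)/(1 - e^{iu}G(t))²`. -/
theorem kendall_renewal_charfun
    (Ft Gt : ℝ) (hG0 : 0 ≤ Gt) (hG1 : Gt < 1) (hGF : Gt ≤ Ft) (hF1 : Ft ≤ 1)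
    (Fn : ℕ → ℝ) (hF0 : Fn 0 = 1)
    (hFn : ∀ n : ℕ, 1 ≤ n → Fn n = Gt ^ (n - 1) * (n * (Ft - Gt) + Gt))
    (p : ℕ → ℝ) (hp : ∀ n, p n = Fn n - Fn (n + 1)) (u : ℝ) :
    ∑' n : ℕ, Complex.exp (Complex.I * u * n) * (p n : ℂ)
      = 1 + (Complex.exp (Complex.I * u) - 1) *
          ((Ft : ℂ) - Complex.exp (Complex.I * u) * (Gt : ℂ) ^ 2) /
          (1 - Complex.exp (Complex.I * u) * (Gt : ℂ)) ^ 2 :=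
  kendall_renewal_charfun_general Ft Gt hG0 hG1 Fn hF0 hFn p hp u
end
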